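/- arXiv:2109.05651 — 7 statements merged into one kernel-verified Lean document; each statement's English description precedes it below -/
import Mathlib

section
/- The left-swap relation ⪯ on weak compositions of a fixed length n is a partial order: it is reflexive, transitive, and antisymmetric. -/
/-- A single left swap: `α` is obtained from `β` by exchanging two parts
`β r < β s` with `r < s`. -/
def LeftSwapStep {n : ℕ} (β α : Fin n → ℕ) : Prop :=
  ∃ r s : Fin n, r < s ∧ β r < β s ∧ α = fun i => β (Equiv.swap r s i)

/-- `α ⪯ β`: `α` is obtained from `β` by a (possibly empty) sequence of left swaps. -/
def LSwapLE {n : ℕ} (α β : Fin n → ℕ) : Prop :=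
  Relation.ReflTransGen LeftSwapStep β α

/-- The weight `∑ i, i * β i`, which strictly decreases under a left swap. -/
def lswapW {n : ℕ} (β : Fin n → ℕ) : ℕ := ∑ i : Fin n, (i : ℕ) * β i

lemma lswapW_lt_of_step {n : ℕ} {β α : Fin n → ℕ} (h : LeftSwapStep β α) :
    lswapW α < lswapW β := by
  obtain ⟨r, s, hrs, hb, rfl⟩ := h
  have hne : r ≠ s := ne_of_lt hrs
  have h1 : ∑ i : Fin n, (i : ℕ) * β (Equiv.swap r s i) =
      ∑ j, ((Equiv.swap r s j : Fin n) : ℕ) * β j :=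
    Fintype.sum_equiv (Equiv.swap r s) _ _
      (fun x => by rw [Equiv.swap_apply_self])
  have split : ∀ F : Fin n → ℕ,
      ∑ i, F i = ∑ i ∈ Finset.univ \ {r, s}, F i + (F r + F s) := by
    intro F
    rw [← Finset.sum_pair hne, Finset.sum_sdiff (Finset.subset_univ _)]
  have hrest : ∀ i ∈ Finset.univ \ ({r, s} : Finset (Fin n)),
      ((Equiv.swap r s i : Fin n) : ℕ) * β i = (i : ℕ) * β i := by
    intro i hi
    simp only [Finset.mem_sdiff, Finset.mem_insert, Finset.mem_singleton] at hi
    rw [Equiv.swap_apply_of_ne_of_ne (by tauto) (by tauto)]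
  unfold lswapW
  rw [h1, split, split (fun i => (i : ℕ) * β i), Finset.sum_congr rfl hrest]
  have hlt : (r : ℕ) < (s : ℕ) := hrs
  simp only [Equiv.swap_apply_left, Equiv.swap_apply_right]
  have key : (s : ℕ) * β r + (r : ℕ) * β s < (r : ℕ) * β r + (s : ℕ) * β s := by
    nlinarith
  omega

lemma lswapW_le_of_le {n : ℕ} {α β : Fin n → ℕ} (h : LSwapLE α β) :
    α = β ∨ lswapW α < lswapW β := by
  induction h with
  | refl => exact Or.inl rfl
  | tail _ h2 ih =>
    right
    have := lswapW_lt_of_step h2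
    rcases ih with rfl | ih
    · exact this
    · omega

/-- The left-swap relation `⪯` on weak compositions of length `n` is a partial
order: reflexive, transitive, and antisymmetric. -/
theorem lSwapLE_partialOrder (n : ℕ) :
    (∀ α : Fin n → ℕ, LSwapLE α α) ∧
    (∀ α β γ : Fin n → ℕ, LSwapLE α β → LSwapLE β γ → LSwapLE α γ) ∧
    (∀ α β : Fin n → ℕ, LSwapLE α β → LSwapLE β α → α = β) := by
  refine ⟨fun α => Relation.ReflTransGen.refl, fun α β γ h1 h2 => h2.trans h1,
    fun α β h1 h2 => ?_⟩
  rcases lswapW_le_of_le h1 with h | h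
  · exact h
  · rcases lswapW_le_of_le h2 with h' | h'
    · exact h'.symm
    · omega
end

section
/- For a partition λ (a weakly increasing weak composition), the set of Kohnert diagrams of λ is in weight-preserving bijection with the set of semistandard reverse tableaux of shape λ, where the weight of a diagram records the number of cells in each row and the weight of a tableau records the number of entries equal to each value. Consequently the Kohnert generating polynomial of a partition λ equals the Schur polynomial s_λ(x_1,...,x_k) for k = length of λ. -/
/-- A cell `(c, r)` records a column `c ≥ 1` and a row `r ≥ 1`. -/
abbrev Cell : Type := ℕ × ℕ

/-- A diagram is a finite set of cells. -/
abbrev Diagram : Type := Finset Cell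

/-- One Kohnert move: the rightmost cell `(c, r)` of some row `r` drops down
within column `c` to the highest vacant position `(c, r')` with `r' < r`
(remaining in the first quadrant); all other cells are unchanged. -/
def KohnertMove (D E : Diagram) : Prop :=
  ∃ c r r' : ℕ, (c, r) ∈ D ∧
    (∀ c', (c', r) ∈ D → c' ≤ c) ∧
    1 ≤ r' ∧ r' < r ∧ (c, r') ∉ D ∧
    (∀ r'', r' < r'' → r'' < r → (c, r'') ∈ D) ∧
    E = insert (c, r') (D.erase (c, r))

/-- The left-justified composition diagram of `α`, with `α (i+1)` cells in row
`i+1` for `i < n`. -/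
def compDiagram (n : ℕ) (α : ℕ → ℕ) : Diagram :=
  (Finset.range n).biUnion (fun i => (Finset.Icc 1 (α (i+1))).image (fun c => (c, i+1)))

/-- The set of Kohnert diagrams of `α`: all diagrams obtainable from the
composition diagram of `α` by a sequence of Kohnert moves. -/
def KD (n : ℕ) (α : ℕ → ℕ) : Set Diagram :=
  {D | Relation.ReflTransGen KohnertMove (compDiagram n α) D}

/-- The row weight of a diagram: the number of cells in row `r`. -/
def rowWt (D : Diagram) (r : ℕ) : ℕ := (D.filter (fun p => p.2 = r)).card

/-- `T` is a semistandard reverse tableau of (partition) shape `lam` supported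
on rows `1,…,n`: a filling of the cells of the diagram of `lam` (zero off the
diagram) with entries `1 ≤ entry ≤ n`, weakly decreasing left to right within
rows and strictly decreasing top to bottom (i.e. strictly increasing with the
row index) within columns. -/
def IsSSRT (n : ℕ) (lam : ℕ → ℕ) (T : Cell → ℕ) : Prop :=
  (∀ p : Cell, p ∉ compDiagram n lam → T p = 0) ∧
  (∀ p ∈ compDiagram n lam, 1 ≤ T p ∧ T p ≤ n) ∧
  (∀ c c' r : ℕ, (c, r) ∈ compDiagram n lam → (c', r) ∈ compDiagram n lam →
    c ≤ c' → T (c', r) ≤ T (c, r)) ∧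
  (∀ c r r' : ℕ, (c, r) ∈ compDiagram n lam → (c, r') ∈ compDiagram n lam →
    r < r' → T (c, r) < T (c, r'))

/-- The weight of a tableau of shape `lam`: the number of entries equal to `i`. -/
def tabWt (n : ℕ) (lam : ℕ → ℕ) (T : Cell → ℕ) (i : ℕ) : ℕ :=
  ((compDiagram n lam).filter (fun p => T p = i)).card

namespace KSB

/-- number of cells of `D` in column `c` with row in `[v, n]`. -/
def ct (n : ℕ) (D : Diagram) (c v : ℕ) : ℕ :=
  ((Finset.Icc v n).filter (fun u => (c, u) ∈ D)).card

/-- number of rows `r ∈ [1,n]` with `lam r ≥ c` (column length of the shape, for `c ≥ 1`). -/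
def mcol (n : ℕ) (lam : ℕ → ℕ) (c : ℕ) : ℕ :=
  ((Finset.Icc 1 n).filter (fun r => c ≤ lam r)).card

def Inv (n : ℕ) (lam : ℕ → ℕ) (D : Diagram) : Prop :=
  (∀ p ∈ D, 1 ≤ p.1 ∧ 1 ≤ p.2 ∧ p.2 ≤ n) ∧
  (∀ c, 1 ≤ c → ct n D c 1 = mcol n lam c) ∧
  (∀ c v, 1 ≤ c → ct n D (c+1) v ≤ ct n D c v)

theorem mem_comp {n : ℕ} {lam : ℕ → ℕ} {p : Cell} :
    p ∈ compDiagram n lam ↔ 1 ≤ p.1 ∧ p.1 ≤ lam p.2 ∧ 1 ≤ p.2 ∧ p.2 ≤ n := by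
  obtain ⟨c, r⟩ := p
  simp only [compDiagram, Finset.mem_biUnion, Finset.mem_range, Finset.mem_image,
    Finset.mem_Icc, Prod.mk.injEq]
  constructor
  · rintro ⟨i, hi, x, ⟨h1, h2⟩, rfl, rfl⟩
    exact ⟨h1, h2, by omega, by omega⟩
  · rintro ⟨h1, h2, h3, h4⟩
    exact ⟨r - 1, by omega, c, ⟨h1, by rwa [Nat.sub_add_cancel h3]⟩, rfl,
      by rw [Nat.sub_add_cancel h3]⟩

theorem mem_comp' {n : ℕ} {lam : ℕ → ℕ} {c r : ℕ} :
    (c, r) ∈ compDiagram n lam ↔ 1 ≤ c ∧ c ≤ lam r ∧ 1 ≤ r ∧ r ≤ n := mem_comp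

theorem ct_split {n : ℕ} {D : Diagram} {c v w : ℕ} (hvw : v ≤ w) (hw : w ≤ n + 1) :
    ct n D c v = ((Finset.Ico v w).filter (fun u => (c, u) ∈ D)).card + ct n D c w := by
  unfold ct
  rw [← Finset.card_union_of_disjoint, ← Finset.filter_union]
  · congr 2
    ext u; simp only [Finset.mem_union, Finset.mem_Ico, Finset.mem_Icc]; omega
  · refine Finset.disjoint_filter_filter ?_
    rw [Finset.disjoint_left]
    intro a ha hb
    simp only [Finset.mem_Ico] at ha
    simp only [Finset.mem_Icc] at hb
    omega

theorem ct_succ {n : ℕ} {D : Diagram} {c v : ℕ} (hv : v ≤ n) :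
    ct n D c v = (if (c, v) ∈ D then 1 else 0) + ct n D c (v + 1) := by
  rw [ct_split (Nat.le_succ v) (by omega)]
  congr 1
  have : Finset.Ico v (v+1) = {v} := by ext x; simp
  rw [this, Finset.filter_singleton]
  split <;> simp

theorem ct_antitone {n : ℕ} {D : Diagram} {c v w : ℕ} (hvw : v ≤ w) :
    ct n D c w ≤ ct n D c v := by
  rcases le_or_gt w (n+1) with hw | hw
  · rw [ct_split hvw hw]; omega
  · have : ct n D c w = 0 := by
      unfold ct
      rw [Finset.Icc_eq_empty (by omega)]; simp
    omega

theorem ct_le {n : ℕ} {D : Diagram} {c v : ℕ} : ct n D c v ≤ n + 1 - v := by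
  calc ct n D c v ≤ (Finset.Icc v n).card := Finset.card_filter_le _ _
  _ = n + 1 - v := Nat.card_Icc v n

theorem ct_pos_of_mem {n : ℕ} {D : Diagram} {c v : ℕ} (h : (c, v) ∈ D) (hv : v ≤ n) :
    1 ≤ ct n D c v := by
  rw [ct_succ hv, if_pos h]; omega

theorem ct_zero_of_gt {n : ℕ} {D : Diagram} {c v : ℕ} (hv : n < v) : ct n D c v = 0 := by
  unfold ct; rw [Finset.Icc_eq_empty (by omega)]; simp

theorem ct_chain {n : ℕ} {lam : ℕ → ℕ} {D : Diagram} (hD : Inv n lam D) {c c' v : ℕ}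
    (hc : 1 ≤ c) (hcc : c ≤ c') : ct n D c' v ≤ ct n D c v := by
  induction c' with
  | zero => omega
  | succ k ih =>
    rcases Nat.lt_or_ge c (k+1) with h | h
    · exact le_trans (hD.2.2 k v (by omega)) (ih (by omega))
    · have : c = k + 1 := by omega
      subst this; exact le_refl _

theorem mcol_le {n : ℕ} {lam : ℕ → ℕ} {c : ℕ} : mcol n lam c ≤ n := by
  calc mcol n lam c ≤ (Finset.Icc 1 n).card := Finset.card_filter_le _ _
  _ = n := by rw [Nat.card_Icc]; omega

theorem mcol_anti {n : ℕ} {lam : ℕ → ℕ} {c c' : ℕ} (h : c ≤ c') :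
    mcol n lam c' ≤ mcol n lam c := by
  apply Finset.card_le_card
  intro r hr
  simp only [Finset.mem_filter] at *
  exact ⟨hr.1, le_trans h hr.2⟩



section Shape
variable {n : ℕ} {lam : ℕ → ℕ}
variable (hinc : ∀ i j : ℕ, 1 ≤ i → i ≤ j → j ≤ n → lam i ≤ lam j)
include hinc

/-- For weakly increasing `lam`, column `c ≥ 1` of the shape is the top
interval `(n - mcol c, n]`. -/
theorem lam_iff_mcol {c r : ℕ} (hr1 : 1 ≤ r) (hrn : r ≤ n) :
    c ≤ lam r ↔ n - mcol n lam c < r := by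
  constructor
  · intro h
    have hsub : Finset.Icc r n ⊆ (Finset.Icc 1 n).filter (fun u => c ≤ lam u) := by
      intro u hu
      simp only [Finset.mem_Icc] at hu
      simp only [Finset.mem_filter, Finset.mem_Icc]
      exact ⟨⟨by omega, hu.2⟩, le_trans h (hinc r u hr1 hu.1 hu.2)⟩
    have := Finset.card_le_card hsub
    rw [Nat.card_Icc] at this
    unfold mcol
    omega
  · intro h
    by_contra hlt
    push_neg at hlt
    have hsub : (Finset.Icc 1 n).filter (fun u => c ≤ lam u) ⊆ Finset.Icc (r+1) n := by
      intro u hu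
      simp only [Finset.mem_filter, Finset.mem_Icc] at hu
      simp only [Finset.mem_Icc]
      refine ⟨?_, hu.1.2⟩
      by_contra hur
      push_neg at hur
      exact absurd (le_trans hu.2 (hinc u r hu.1.1 (by omega) hrn)) (by omega)
    have := Finset.card_le_card hsub
    rw [Nat.card_Icc] at this
    unfold mcol at h
    omega

theorem mem_comp_iff {c r : ℕ} (hc : 1 ≤ c) (hr1 : 1 ≤ r) (hrn : r ≤ n) :
    (c, r) ∈ compDiagram n lam ↔ n - mcol n lam c < r := by
  rw [mem_comp]
  simp only [hc, hr1, hrn, true_and, and_true]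
  exact lam_iff_mcol hinc hr1 hrn

omit hinc in
theorem inv_comp : Inv n lam (compDiagram n lam) := by
  refine ⟨?_, ?_, ?_⟩
  · intro p hp
    rw [mem_comp] at hp
    exact ⟨hp.1, hp.2.2.1, hp.2.2.2⟩
  · intro c hc
    unfold ct mcol
    congr 1
    apply Finset.filter_congr
    intro u hu
    simp only [Finset.mem_Icc] at hu
    simp only [mem_comp, hc, hu.1, hu.2, true_and, and_true, eq_iff_iff, iff_true_intro trivial]
  · intro c v hc
    apply Finset.card_le_card
    intro u hu
    simp only [Finset.mem_filter, mem_comp] at *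
    exact ⟨hu.1, by omega, by omega, hu.2.2.2⟩
end Shape

section Moves
variable {n : ℕ} {lam : ℕ → ℕ}

theorem ct_swap_ne {D : Diagram} {c c'' a b v : ℕ} (hne : c'' ≠ c) :
    ct n (insert (c, b) (D.erase (c, a))) c'' v = ct n D c'' v := by
  unfold ct
  congr 1
  apply Finset.filter_congr
  intro u _
  simp only [Finset.mem_insert, Finset.mem_erase, ne_eq, Prod.mk.injEq, eq_iff_iff]
  constructor
  · rintro (⟨h1, _⟩ | ⟨_, h⟩)
    · exact absurd h1 hne
    · exact h
  · intro h
    exact Or.inr ⟨fun hh => hne hh.1, h⟩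

theorem ct_swap_eq {D : Diagram} {c a b v : ℕ} (ha : (c, a) ∈ D) (hb : (c, b) ∉ D)
    (han : a ≤ n) (hbn : b ≤ n) :
    ct n (insert (c, b) (D.erase (c, a))) c v + (if v ≤ a then 1 else 0)
      = ct n D c v + (if v ≤ b then 1 else 0) := by
  unfold ct
  rw [Finset.card_filter, Finset.card_filter]
  have h1 : ∀ w, w ≤ n → ((if v ≤ w then 1 else 0) : ℕ)
      = ∑ u ∈ Finset.Icc v n, if u = w then 1 else 0 := by
    intro w hw
    rw [Finset.sum_ite_eq' (Finset.Icc v n) w (fun _ => 1)]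
    simp only [Finset.mem_Icc]
    by_cases h : v ≤ w <;> simp [h, hw]
  rw [h1 a han, h1 b hbn, ← Finset.sum_add_distrib, ← Finset.sum_add_distrib]
  apply Finset.sum_congr rfl
  intro u _
  have hab : a ≠ b := fun h => hb (h ▸ ha)
  have hmem : ((c, u) ∈ insert (c, b) (D.erase (c, a))) ↔ (u = b ∨ ((c, u) ∈ D ∧ u ≠ a)) := by
    simp only [Finset.mem_insert, Finset.mem_erase, ne_eq, Prod.mk.injEq]
    tauto
  by_cases hua : u = a
  · subst hua
    rw [if_pos rfl, if_neg hab, if_pos ha, if_neg]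
    rw [hmem]
    rintro (h | ⟨_, h⟩) <;> [exact hab h; exact h rfl]
  · by_cases hub : u = b
    · subst hub
      rw [if_neg hua, if_pos rfl, if_neg hb, if_pos]
      rw [hmem]
      exact Or.inl rfl
    · rw [if_neg hua, if_neg hub]
      have : ((c, u) ∈ insert (c, b) (D.erase (c, a))) ↔ (c, u) ∈ D := by
        rw [hmem]
        constructor
        · rintro (h | ⟨h, _⟩) <;> [exact absurd h hub; exact h]
        · intro h; exact Or.inr ⟨h, hua⟩
      rw [if_congr this rfl rfl]

theorem inv_move {D E : Diagram} (hD : Inv n lam D) (hm : KohnertMove D E) :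
    Inv n lam E := by
  obtain ⟨c, r, r', hcr, hright, hr'1, hr'r, hvac, hbet, rfl⟩ := hm
  obtain ⟨hc1, _, hrn⟩ := hD.1 (c, r) hcr
  simp only at hc1 hrn
  have hswap : ∀ v, ct n (insert (c, r') (D.erase (c, r))) c v + (if v ≤ r then 1 else 0)
      = ct n D c v + (if v ≤ r' then 1 else 0) :=
    fun v => ct_swap_eq hcr hvac hrn (by omega)
  refine ⟨?_, ?_, ?_⟩
  · intro p hp
    rcases Finset.mem_insert.mp hp with h | h
    · subst h; exact ⟨hc1, hr'1, by omega⟩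
    · exact hD.1 p (Finset.mem_of_mem_erase h)
  · intro c'' hc''
    by_cases hcc : c'' = c
    · rw [hcc]
      have h0 := hswap 1
      rw [if_pos (by omega : (1:ℕ) ≤ r), if_pos hr'1] at h0
      have h2 := hD.2.1 c (by omega)
      omega
    · rw [ct_swap_ne hcc]
      exact hD.2.1 c'' hc''
  · intro c0 v hc0
    by_cases h1 : c0 + 1 = c
    · -- left neighbour of the moved column
      have hle : ct n (insert (c, r') (D.erase (c, r))) c v ≤ ct n D c v := by
        have hsv := hswap v
        by_cases hv1 : v ≤ r
        · by_cases hv2 : v ≤ r'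
          · rw [if_pos hv1, if_pos hv2] at hsv; omega
          · rw [if_pos hv1, if_neg hv2] at hsv; omega
        · rw [if_neg hv1, if_neg (by omega : ¬ v ≤ r')] at hsv; omega
      have h3 := hD.2.2 c0 v hc0
      calc ct n (insert (c, r') (D.erase (c, r))) (c0+1) v
          = ct n (insert (c, r') (D.erase (c, r))) c v := by rw [h1]
        _ ≤ ct n D c v := hle
        _ = ct n D (c0+1) v := by rw [h1]
        _ ≤ ct n D c0 v := h3
        _ = ct n (insert (c, r') (D.erase (c, r))) c0 v := (ct_swap_ne (by omega)).symm
    · by_cases h2 : c0 = c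
      · subst h2
        rw [ct_swap_ne (by omega)]
        have := hswap v
        by_cases hv2 : v ≤ r'
        · have hEv : ct n (insert (c0, r') (D.erase (c0, r))) c0 v = ct n D c0 v := by
            rw [if_pos (by omega : v ≤ r), if_pos hv2] at this; omega
          rw [hEv]; exact hD.2.2 c0 v hc0
        · by_cases hv1 : v ≤ r
          · -- the interesting case: r' < v ≤ r
            have hEv : ct n (insert (c0, r') (D.erase (c0, r))) c0 v + 1 = ct n D c0 v := by
              rw [if_pos hv1, if_neg hv2] at this; omega
            -- block argument
            have hs1 : ct n D c0 v
                = ((Finset.Ico v (r+1)).filter (fun u => (c0, u) ∈ D)).card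
                  + ct n D c0 (r+1) := ct_split (by omega) (by omega)
            have hfull : (Finset.Ico v (r+1)).filter (fun u => (c0, u) ∈ D)
                = Finset.Ico v (r+1) := by
              apply Finset.filter_true_of_mem
              intro u hu
              simp only [Finset.mem_Ico] at hu
              rcases Nat.lt_or_ge u r with h | h
              · exact hbet u (by omega) h
              · have : u = r := by omega
                subst this; exact hcr
            have hs2 : ct n D (c0+1) v
                = ((Finset.Ico v (r+1)).filter (fun u => (c0+1, u) ∈ D)).card
                  + ct n D (c0+1) (r+1) := ct_split (by omega) (by omega)
            have hmiss : ((Finset.Ico v (r+1)).filter (fun u => (c0+1, u) ∈ D)).card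
                ≤ r - v := by
              have hsub : (Finset.Ico v (r+1)).filter (fun u => (c0+1, u) ∈ D)
                  ⊆ (Finset.Ico v (r+1)).erase r := by
                intro u hu
                simp only [Finset.mem_filter, Finset.mem_Ico] at hu
                simp only [Finset.mem_erase, Finset.mem_Ico]
                refine ⟨?_, hu.1⟩
                intro hur
                subst hur
                exact absurd (hright (c0+1) hu.2) (by omega)
              calc ((Finset.Ico v (r+1)).filter (fun u => (c0+1, u) ∈ D)).card
                  ≤ ((Finset.Ico v (r+1)).erase r).card := Finset.card_le_card hsub
                _ ≤ r - v := by
                    rw [Finset.card_erase_of_mem (by simp [Finset.mem_Ico]; omega),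
                      Nat.card_Ico]
                    omega
            have htt : ct n D (c0+1) (r+1) ≤ ct n D c0 (r+1) := hD.2.2 c0 (r+1) hc0
            rw [hfull, Nat.card_Ico] at hs1
            omega
          · have hEv : ct n (insert (c0, r') (D.erase (c0, r))) c0 v = ct n D c0 v := by
              rw [if_neg hv1, if_neg hv2] at this; omega
            rw [hEv]; exact hD.2.2 c0 v hc0
      · rw [ct_swap_ne h2, ct_swap_ne h1]
        exact hD.2.2 c0 v hc0

theorem inv_of_KD {D : Diagram} (hD : D ∈ KD n lam) : Inv n lam D := by
  induction hD with
  | refl => exact inv_comp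
  | tail _ h ih => exact inv_move ih h

end Moves

section Reverse
variable {n : ℕ} {lam : ℕ → ℕ}
variable (hinc : ∀ i j : ℕ, 1 ≤ i → i ≤ j → j ≤ n → lam i ≤ lam j)
include hinc

omit hinc in
theorem pos_cell {D : Diagram} (hD : Inv n lam D) {c k : ℕ} (hk1 : 1 ≤ k)
    (hk : k ≤ ct n D c 1) : ∃ v, (c, v) ∈ D ∧ ct n D c v = k := by
  set V := (Finset.Icc 1 n).filter (fun v => k ≤ ct n D c v) with hV
  have hn1 : 1 ≤ n := by
    have hpos : 0 < ct n D c 1 := by omega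
    rw [ct, Finset.card_pos] at hpos
    obtain ⟨u, hu⟩ := hpos
    simp only [Finset.mem_filter, Finset.mem_Icc] at hu
    omega
  have h1V : 1 ∈ V := by
    simp only [hV, Finset.mem_filter, Finset.mem_Icc]
    exact ⟨⟨le_refl 1, hn1⟩, hk⟩
  have hne : V.Nonempty := ⟨1, h1V⟩
  set v := V.max' hne with hv
  have hvV : v ∈ V := V.max'_mem hne
  simp only [hV, Finset.mem_filter, Finset.mem_Icc] at hvV
  obtain ⟨⟨hv1, hvn⟩, hvk⟩ := hvV
  have hsucc : ct n D c (v + 1) < k := by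
    rcases eq_or_lt_of_le hvn with h | h
    · rw [ct_zero_of_gt (by omega)]; omega
    · by_contra hge
      push_neg at hge
      have : v + 1 ∈ V := by
        simp only [hV, Finset.mem_filter, Finset.mem_Icc]
        exact ⟨⟨by omega, by omega⟩, hge⟩
      have := V.le_max' _ this
      omega
  have hstep := ct_succ (D := D) (c := c) hvn
  by_cases hm : (c, v) ∈ D
  · rw [if_pos hm] at hstep
    exact ⟨v, hm, by omega⟩
  · rw [if_neg hm] at hstep
    omega

/-- The row of the cell of `D` in column `c` at position `k` from the top. -/
def rowOf (n : ℕ) (D : Diagram) (c k : ℕ) : ℕ :=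
  (((Finset.Icc 1 n).filter (fun v => k ≤ ct n D c v)).max).getD 0

omit hinc in
theorem rowOf_eq {D : Diagram} (hD : Inv n lam D) {c v k : ℕ} (hv : (c, v) ∈ D)
    (hct : ct n D c v = k) : rowOf n D c k = v := by
  obtain ⟨_, hv1, hvn⟩ := hD.1 _ hv
  simp only at hv1 hvn
  set V := (Finset.Icc 1 n).filter (fun v => k ≤ ct n D c v) with hV
  have hvV : v ∈ V := by
    simp only [hV, Finset.mem_filter, Finset.mem_Icc]
    exact ⟨⟨hv1, hvn⟩, le_of_eq hct.symm⟩
  have hub : ∀ w ∈ V, w ≤ v := by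
    intro w hw
    simp only [hV, Finset.mem_filter, Finset.mem_Icc] at hw
    by_contra hgt
    push_neg at hgt
    have h1 : ct n D c w ≤ ct n D c (v + 1) := ct_antitone (by omega)
    have h2 := ct_succ (D := D) (c := c) hvn
    rw [if_pos hv] at h2
    omega
  have hne : V.Nonempty := ⟨v, hvV⟩
  have : V.max' hne = v := le_antisymm (Finset.max'_le _ _ _ hub) (V.le_max' _ hvV)
  rw [rowOf, ← hV, ← Finset.coe_max' hne, this]
  rfl

theorem eq_comp_of_no_deficient {D : Diagram} (hD : Inv n lam D)
    (h : ∀ p ∈ D, n + 1 ≤ p.2 + ct n D p.1 p.2) : D = compDiagram n lam := by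
  apply Finset.ext
  rintro ⟨c, r⟩
  constructor
  · intro hp
    obtain ⟨hc1, hr1, hrn⟩ := hD.1 _ hp
    simp only at hc1 hr1 hrn
    have hub : ct n D c r ≤ n + 1 - r := ct_le
    have hlb := h _ hp
    simp only at hlb
    have hle : ct n D c r ≤ mcol n lam c := by
      rw [← hD.2.1 c hc1]; exact ct_antitone hr1
    rw [mem_comp_iff hinc hc1 hr1 hrn]
    omega
  · intro hp
    rw [mem_comp] at hp
    obtain ⟨hc1, hclam, hr1, hrn⟩ := hp
    simp only at hc1 hclam hr1 hrn
    have hkm : n + 1 - r ≤ mcol n lam c := by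
      have h1 := (lam_iff_mcol hinc hr1 hrn).mp hclam
      have h2 : mcol n lam c ≤ n := mcol_le
      omega
    obtain ⟨v, hv, hctv⟩ := pos_cell hD (k := n + 1 - r) (by omega)
      (by rw [hD.2.1 c hc1]; exact hkm)
    have hvn := (hD.1 _ hv).2.2
    simp only at hvn
    have hub : ct n D c v ≤ n + 1 - v := ct_le
    have hlb := h _ hv
    simp only at hlb
    have : v = r := by omega
    subst this
    exact hv

theorem exists_raise {D : Diagram} (hD : Inv n lam D) (hne : D ≠ compDiagram n lam) :
    ∃ E, Inv n lam E ∧ KohnertMove E D ∧ (∑ p ∈ E, (n - p.2)) < ∑ p ∈ D, (n - p.2) := by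
  classical
  set Def := D.filter (fun p => p.2 + ct n D p.1 p.2 ≤ n) with hDefd
  have hDne : Def.Nonempty := by
    by_contra h
    rw [Finset.not_nonempty_iff_eq_empty] at h
    refine hne (eq_comp_of_no_deficient hinc hD (fun p hp => ?_))
    by_contra hb
    push_neg at hb
    have : p ∈ Def := by
      rw [hDefd, Finset.mem_filter]
      exact ⟨hp, by omega⟩
    rw [h] at this
    exact absurd this (Finset.notMem_empty p)
  obtain ⟨p0, hp0, hp0max⟩ := Def.exists_max_image Prod.snd hDne
  have hD'ne : (Def.filter (fun p => p.2 = p0.2)).Nonempty := ⟨p0, by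
    rw [Finset.mem_filter]; exact ⟨hp0, rfl⟩⟩
  obtain ⟨q, hq', hqmin⟩ := (Def.filter (fun p => p.2 = p0.2)).exists_min_image Prod.fst hD'ne
  rw [Finset.mem_filter] at hq'
  obtain ⟨hqDef, hq2⟩ := hq'
  obtain ⟨c, r'⟩ := q
  simp only at hq2
  rw [hDefd, Finset.mem_filter] at hqDef
  obtain ⟨hqD, hqdef⟩ := hqDef
  simp only at hqdef
  -- basic facts
  obtain ⟨hc1, hr'1, hr'n⟩ := hD.1 _ hqD
  simp only at hc1 hr'1 hr'n
  have hctpos : 1 ≤ ct n D c r' := ct_pos_of_mem hqD hr'n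
  have hr'ltn : r' < n := by omega
  have hctsucc := ct_succ (D := D) (c := c) hr'n
  rw [if_pos hqD] at hctsucc
  -- row-maximality and column-minimality of (c, r') among deficient cells
  have hrowmax : ∀ p ∈ D, p.2 + ct n D p.1 p.2 ≤ n → p.2 ≤ r' := by
    intro p hp hpd
    have : p ∈ Def := by rw [hDefd, Finset.mem_filter]; exact ⟨hp, hpd⟩
    have := hp0max p this
    omega
  have hcolmin : ∀ p ∈ D, p.2 + ct n D p.1 p.2 ≤ n → p.2 = r' → c ≤ p.1 := by
    intro p hp hpd hpr
    have : p ∈ Def.filter (fun p => p.2 = p0.2) := by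
      rw [Finset.mem_filter, hDefd, Finset.mem_filter]
      exact ⟨⟨hp, hpd⟩, by omega⟩
    exact hqmin p this
  have hnotmem : (c, r' + 1) ∉ D := by
    intro h
    have := hrowmax (c, r' + 1) h (by simp only; omega)
    simp only at this
    omega
  have hright : ∀ c'', (c'', r' + 1) ∈ D → c'' ≤ c := by
    intro c'' h
    by_contra hgt
    push_neg at hgt
    have hchain : ct n D c'' (r' + 1) ≤ ct n D c (r' + 1) := ct_chain hD hc1 (le_of_lt hgt)
    have hnotdef : ¬ ((r' + 1) + ct n D c'' (r' + 1) ≤ n) := by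
      intro hd
      have := hrowmax _ h (by simp only; omega)
      simp only at this
      omega
    omega
  refine ⟨insert (c, r' + 1) (D.erase (c, r')), ?_, ?_, ?_⟩
  case _ => -- Inv
    have hswap : ∀ v, ct n (insert (c, r' + 1) (D.erase (c, r'))) c v
        + (if v ≤ r' then 1 else 0) = ct n D c v + (if v ≤ r' + 1 then 1 else 0) :=
      fun v => ct_swap_eq hqD hnotmem hr'n (by omega)
    refine ⟨?_, ?_, ?_⟩
    · intro p hp
      rcases Finset.mem_insert.mp hp with h | h
      · subst h; exact ⟨hc1, by omega, by omega⟩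
      · exact hD.1 p (Finset.mem_of_mem_erase h)
    · intro c'' hc''
      by_cases hcc : c'' = c
      · rw [hcc]
        have h0 := hswap 1
        rw [if_pos hr'1, if_pos (by omega : 1 ≤ r' + 1)] at h0
        have h2 := hD.2.1 c hc1
        omega
      · rw [ct_swap_ne hcc]
        exact hD.2.1 c'' hc''
    · intro c0 v hc0
      by_cases h1 : c0 + 1 = c
      · -- left neighbour: need strict room
        have hE0 : ct n (insert (c, r' + 1) (D.erase (c, r'))) c0 v = ct n D c0 v :=
          ct_swap_ne (by omega)
        have hsv := hswap v
        by_cases hv : v = r' + 1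
        · subst hv
          rw [if_neg (by omega), if_pos (le_refl _)] at hsv
          -- ct E c (r'+1) = ct D c (r'+1) + 1 ; need ≤ ct D c0 (r'+1)
          have hEc : ct n (insert (c, r' + 1) (D.erase (c, r'))) c (r' + 1)
              = ct n D c (r' + 1) + 1 := by omega
          have hmono := hD.2.2 c0 (r' + 1) hc0
          rw [h1] at hmono
          -- suffices strict: ct D c (r'+1) < ct D c0 (r'+1)
          have hstrict : ct n D c (r' + 1) < ct n D c0 (r' + 1) := by
            by_contra hh
            push_neg at hh
            have heq : ct n D c0 (r' + 1) = ct n D c (r' + 1) := le_antisymm hh hmono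
            have hb : ct n D c r' ≤ ct n D c0 r' := by
              have := hD.2.2 c0 r' hc0
              rw [h1] at this
              exact this
            have hcs := ct_succ (D := D) (c := c0) hr'n
            by_cases hm : (c0, r') ∈ D
            · rw [if_pos hm] at hcs
              have hdef0 : r' + ct n D c0 r' ≤ n := by omega
              have := hcolmin (c0, r') hm (by simp only; omega) rfl
              simp only at this
              omega
            · rw [if_neg hm] at hcs
              omega
          rw [h1, hEc, hE0]
          omega
        · rw [if_congr (Iff.rfl) rfl rfl] at hsv
          have hEc : ct n (insert (c, r' + 1) (D.erase (c, r'))) c v = ct n D c v := by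
            by_cases hv2 : v ≤ r'
            · rw [if_pos hv2, if_pos (by omega)] at hsv; omega
            · rw [if_neg hv2, if_neg (by omega)] at hsv; omega
          rw [h1, hEc, hE0]
          have := hD.2.2 c0 v hc0
          rw [h1] at this
          exact this
      · by_cases h2 : c0 = c
        · -- moved column on the left: LHS unchanged, RHS only grows
          have hE1 : ct n (insert (c, r' + 1) (D.erase (c, r'))) (c0 + 1) v
              = ct n D (c0 + 1) v := ct_swap_ne (by omega)
          have hsv := hswap v
          have hge : ct n D c v ≤ ct n (insert (c, r' + 1) (D.erase (c, r'))) c v := by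
            by_cases hv2 : v ≤ r'
            · rw [if_pos hv2, if_pos (by omega)] at hsv; omega
            · by_cases hv3 : v ≤ r' + 1
              · rw [if_neg hv2, if_pos hv3] at hsv; omega
              · rw [if_neg hv2, if_neg hv3] at hsv; omega
          rw [hE1, h2]
          exact le_trans (hD.2.2 c v (by omega)) (h2 ▸ hge)
        · rw [ct_swap_ne h2, ct_swap_ne h1]
          exact hD.2.2 c0 v hc0
  case _ => -- KohnertMove E D
    refine ⟨c, r' + 1, r', Finset.mem_insert_self _ _, ?_, hr'1, by omega, ?_, ?_, ?_⟩
    · intro c'' h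
      rcases Finset.mem_insert.mp h with h | h
      · rw [Prod.mk.injEq] at h
        omega
      · exact hright c'' (Finset.mem_of_mem_erase h)
    · intro h
      rcases Finset.mem_insert.mp h with h | h
      · rw [Prod.mk.injEq] at h
        omega
      · exact absurd (Finset.mem_of_mem_erase h) (by
          intro hh
          exact (Finset.notMem_erase _ _) h)
    · intro r'' h1 h2
      exact absurd rfl (by omega : ¬ (r'' = r''))
    · have h1 : (insert (c, r' + 1) (D.erase (c, r'))).erase (c, r' + 1) = D.erase (c, r') := by
        apply Finset.erase_insert
        intro hh
        exact hnotmem (Finset.mem_of_mem_erase hh)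
      rw [h1, Finset.insert_erase hqD]
  case _ => -- potential decreases
    have hnm' : (c, r' + 1) ∉ D.erase (c, r') := fun hh => hnotmem (Finset.mem_of_mem_erase hh)
    rw [Finset.sum_insert hnm']
    have hsum : (n - r') + ∑ x ∈ D.erase (c, r'), (n - x.2) = ∑ x ∈ D, (n - x.2) :=
      Finset.add_sum_erase D (fun p => n - p.2) hqD
    have hgoal : (n - (r' + 1)) + ∑ x ∈ D.erase (c, r'), (n - x.2)
        < (n - r') + ∑ x ∈ D.erase (c, r'), (n - x.2) := by omega
    calc (n - ((c, r' + 1) : Cell).2) + ∑ x ∈ D.erase (c, r'), (n - x.2)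
        = (n - (r' + 1)) + ∑ x ∈ D.erase (c, r'), (n - x.2) := rfl
      _ < (n - r') + ∑ x ∈ D.erase (c, r'), (n - x.2) := hgoal
      _ = ∑ x ∈ D, (n - x.2) := hsum

theorem KD_of_inv {D : Diagram} (hD : Inv n lam D) : D ∈ KD n lam := by
  suffices H : ∀ N : ℕ, ∀ D : Diagram, (∑ p ∈ D, (n - p.2)) ≤ N → Inv n lam D → D ∈ KD n lam by
    exact H _ D le_rfl hD
  intro N
  induction N with
  | zero =>
    intro D hPhi hD'
    rcases eq_or_ne D (compDiagram n lam) with rfl | hne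
    · exact Relation.ReflTransGen.refl
    · obtain ⟨E, _, _, hlt⟩ := exists_raise hinc hD' hne
      omega
  | succ N ih =>
    intro D hPhi hD'
    rcases eq_or_ne D (compDiagram n lam) with rfl | hne
    · exact Relation.ReflTransGen.refl
    · obtain ⟨E, hEinv, hmove, hlt⟩ := exists_raise hinc hD' hne
      exact (ih E (by omega) hEinv).tail hmove

theorem KD_iff_inv {D : Diagram} : D ∈ KD n lam ↔ Inv n lam D :=
  ⟨inv_of_KD, KD_of_inv hinc⟩

end Reverse

section Bijection
variable {n : ℕ} {lam : ℕ → ℕ}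
variable (hinc : ∀ i j : ℕ, 1 ≤ i → i ≤ j → j ≤ n → lam i ≤ lam j)
include hinc

/-- The tableau associated to a Kohnert diagram. -/
noncomputable def toT (n : ℕ) (lam : ℕ → ℕ) (D : Diagram) : Cell → ℕ :=
  fun p => if p ∈ compDiagram n lam then rowOf n D p.1 (n + 1 - p.2) else 0

/-- The diagram associated to a tableau. -/
def fromT (n : ℕ) (lam : ℕ → ℕ) (T : Cell → ℕ) : Diagram :=
  (compDiagram n lam).image (fun p => (p.1, T p))

omit hinc in
theorem row_le_of_ct_le {D : Diagram} {c v w : ℕ} (hv : (c, v) ∈ D) (hvn : v ≤ n)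
    (h : ct n D c v ≤ ct n D c w) : w ≤ v := by
  by_contra hgt
  push_neg at hgt
  have h1 : ct n D c w ≤ ct n D c (v + 1) := ct_antitone (by omega)
  have h2 := ct_succ (D := D) (c := c) hvn
  rw [if_pos hv] at h2
  omega

theorem shape_pos {c y : ℕ} (hp : (c, y) ∈ compDiagram n lam) :
    1 ≤ n + 1 - y ∧ n + 1 - y ≤ mcol n lam c := by
  rw [mem_comp'] at hp
  obtain ⟨hc1, hcl, hy1, hyn⟩ := hp
  have := (lam_iff_mcol hinc hy1 hyn).mp hcl
  omega

theorem toT_cell {D : Diagram} (hD : Inv n lam D) {c y : ℕ}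
    (hp : (c, y) ∈ compDiagram n lam) :
    (c, toT n lam D (c, y)) ∈ D ∧ ct n D c (toT n lam D (c, y)) = n + 1 - y := by
  obtain ⟨hk1, hkm⟩ := shape_pos hinc hp
  obtain ⟨v, hv, hctv⟩ := pos_cell hD hk1 (by
    rw [hD.2.1 c (mem_comp'.mp hp).1]
    exact hkm)
  have hr := rowOf_eq hD hv hctv
  have : toT n lam D (c, y) = v := by
    rw [toT, if_pos hp]
    exact hr
  rw [this]
  exact ⟨hv, hctv⟩

theorem ssrt_toT {D : Diagram} (hD : Inv n lam D) : IsSSRT n lam (toT n lam D) := by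
  refine ⟨?_, ?_, ?_, ?_⟩
  · intro p hp
    rw [toT, if_neg hp]
  · intro p hp
    obtain ⟨c, y⟩ := p
    obtain ⟨hv, _⟩ := toT_cell hinc hD hp
    have := hD.1 _ hv
    exact ⟨this.2.1, this.2.2⟩
  · intro c c' y hp hp' hcc
    obtain ⟨hv, hctv⟩ := toT_cell hinc hD hp
    obtain ⟨hv', hctv'⟩ := toT_cell hinc hD hp'
    have hc1 : 1 ≤ c := (mem_comp'.mp hp).1
    have hchain : ct n D c (toT n lam D (c', y)) ≥ ct n D c' (toT n lam D (c', y)) :=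
      ct_chain hD hc1 hcc
    refine row_le_of_ct_le hv ((hD.1 _ hv).2.2) ?_
    rw [hctv, ← hctv']
    exact hchain
  · intro c y y' hp hp' hyy
    obtain ⟨hv, hctv⟩ := toT_cell hinc hD hp
    obtain ⟨hv', hctv'⟩ := toT_cell hinc hD hp'
    have hyn' : y' ≤ n := (mem_comp'.mp hp').2.2.2
    by_contra hge
    push_neg at hge
    have := ct_antitone (D := D) (n := n) (c := c) hge
    omega

theorem wt_toT {D : Diagram} (hD : Inv n lam D) (i : ℕ) :
    rowWt D i = tabWt n lam (toT n lam D) i := by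
  rw [rowWt, tabWt]
  symm
  apply Finset.card_bij (fun p _ => (p.1, i))
  · rintro ⟨c, y⟩ hp
    rw [Finset.mem_filter] at hp
    obtain ⟨hp, hT⟩ := hp
    obtain ⟨hv, _⟩ := toT_cell hinc hD hp
    have hT2 : toT n lam D (c, y) = i := hT
    rw [Finset.mem_filter]
    exact ⟨by rw [← hT2]; exact hv, by simp⟩
  · rintro ⟨c, y⟩ hp ⟨c', y'⟩ hp' heq
    rw [Finset.mem_filter] at hp hp'
    obtain ⟨hp, hT⟩ := hp
    obtain ⟨hp', hT'⟩ := hp'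
    have hc : c = c' := congrArg Prod.fst heq
    subst hc
    obtain ⟨_, hctv⟩ := toT_cell hinc hD hp
    obtain ⟨_, hctv'⟩ := toT_cell hinc hD hp'
    have hT2 : toT n lam D (c, y) = i := hT
    have hT2' : toT n lam D (c, y') = i := hT'
    rw [hT2] at hctv
    rw [hT2'] at hctv'
    have hyn : y ≤ n := (mem_comp'.mp hp).2.2.2
    have hyn' : y' ≤ n := (mem_comp'.mp hp').2.2.2
    have : y = y' := by omega
    rw [this]
  · rintro ⟨c, u⟩ hu
    rw [Finset.mem_filter] at hu
    obtain ⟨huD, hui⟩ := hu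
    have hui2 : u = i := hui
    subst hui2
    obtain ⟨hc1, hu1, hun⟩ := hD.1 _ huD
    simp only at hc1 hu1 hun
    have hk1 : 1 ≤ ct n D c u := ct_pos_of_mem huD hun
    have hkm : ct n D c u ≤ mcol n lam c := by
      rw [← hD.2.1 c hc1]
      exact ct_antitone hu1
    have hmn : mcol n lam c ≤ n := mcol_le
    refine ⟨(c, n + 1 - ct n D c u), ?_, ?_⟩
    · rw [Finset.mem_filter]
      have hsh : (c, n + 1 - ct n D c u) ∈ compDiagram n lam := by
        rw [mem_comp_iff hinc hc1 (by omega) (by omega)]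
        omega
      refine ⟨hsh, ?_⟩
      show toT n lam D (c, n + 1 - ct n D c u) = u
      rw [toT, if_pos hsh]
      simp only
      have : n + 1 - (n + 1 - ct n D c u) = ct n D c u := by omega
      rw [this]
      exact rowOf_eq hD huD rfl
    · rfl

omit hinc in
theorem mem_fromT {T : Cell → ℕ} {c v : ℕ} :
    (c, v) ∈ fromT n lam T ↔ ∃ y, (c, y) ∈ compDiagram n lam ∧ T (c, y) = v := by
  rw [fromT, Finset.mem_image]
  constructor
  · rintro ⟨⟨c', y⟩, hmem, heq⟩
    rw [Prod.mk.injEq] at heq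
    obtain ⟨rfl, rfl⟩ := heq
    exact ⟨y, hmem, rfl⟩
  · rintro ⟨y, hmem, heq⟩
    exact ⟨(c, y), hmem, by rw [heq]⟩

omit hinc in
theorem ct_fromT {T : Cell → ℕ} (hT : IsSSRT n lam T) (c v : ℕ) :
    ct n (fromT n lam T) c v
      = ((Finset.Icc 1 n).filter
          (fun y => (c, y) ∈ compDiagram n lam ∧ v ≤ T (c, y))).card := by
  rw [ct]
  symm
  apply Finset.card_bij (fun y _ => T (c, y))
  · intro y hy
    rw [Finset.mem_filter] at hy
    obtain ⟨_, hsh, hvT⟩ := hy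
    rw [Finset.mem_filter, Finset.mem_Icc]
    exact ⟨⟨hvT, (hT.2.1 _ hsh).2⟩, mem_fromT.mpr ⟨y, hsh, rfl⟩⟩
  · intro y hy y' hy' heq
    rw [Finset.mem_filter] at hy hy'
    obtain ⟨_, hsh, _⟩ := hy
    obtain ⟨_, hsh', _⟩ := hy'
    by_contra hne
    rcases Nat.lt_or_ge y y' with h | h
    · exact absurd heq (Nat.ne_of_lt (hT.2.2.2 c y y' hsh hsh' h))
    · have : y' < y := by omega
      exact absurd heq.symm (Nat.ne_of_lt (hT.2.2.2 c y' y hsh' hsh this))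
  · intro u hu
    rw [Finset.mem_filter, Finset.mem_Icc] at hu
    obtain ⟨⟨hvu, hun⟩, hmem⟩ := hu
    obtain ⟨y, hsh, hTy⟩ := mem_fromT.mp hmem
    refine ⟨y, ?_, hTy⟩
    rw [Finset.mem_filter, Finset.mem_Icc]
    have := mem_comp'.mp hsh
    exact ⟨⟨this.2.2.1, this.2.2.2⟩, hsh, by omega⟩

omit hinc in
theorem inv_fromT {T : Cell → ℕ} (hT : IsSSRT n lam T) : Inv n lam (fromT n lam T) := by
  refine ⟨?_, ?_, ?_⟩
  · rintro ⟨c, v⟩ hp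
    obtain ⟨y, hsh, hTy⟩ := mem_fromT.mp hp
    have h1 := hT.2.1 _ hsh
    have h2 := mem_comp'.mp hsh
    exact ⟨h2.1, by omega, by omega⟩
  · intro c hc1
    rw [ct_fromT hT, mcol]
    congr 1
    apply Finset.filter_congr
    intro y hy
    rw [Finset.mem_Icc] at hy
    constructor
    · rintro ⟨hsh, _⟩
      exact (mem_comp'.mp hsh).2.1
    · intro hcl
      have hsh : (c, y) ∈ compDiagram n lam := mem_comp'.mpr ⟨hc1, hcl, hy.1, hy.2⟩
      exact ⟨hsh, (hT.2.1 _ hsh).1⟩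
  · intro c v hc1
    rw [ct_fromT hT, ct_fromT hT]
    apply Finset.card_le_card
    intro y hy
    rw [Finset.mem_filter] at hy ⊢
    obtain ⟨hicc, hsh, hvT⟩ := hy
    obtain ⟨_, hcl, hy1, hyn⟩ := mem_comp'.mp hsh
    have hsh' : (c, y) ∈ compDiagram n lam :=
      mem_comp'.mpr ⟨hc1, by omega, hy1, hyn⟩
    refine ⟨hicc, hsh', le_trans hvT (hT.2.2.1 c (c + 1) y hsh' hsh (by omega))⟩

theorem fromT_toT {D : Diagram} (hD : Inv n lam D) : fromT n lam (toT n lam D) = D := by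
  apply Finset.ext
  rintro ⟨c, v⟩
  rw [mem_fromT]
  constructor
  · rintro ⟨y, hsh, hTy⟩
    obtain ⟨hv, _⟩ := toT_cell hinc hD hsh
    rw [hTy] at hv
    exact hv
  · intro hv
    obtain ⟨hc1, hv1, hvn⟩ := hD.1 _ hv
    simp only at hc1 hv1 hvn
    have hk1 : 1 ≤ ct n D c v := ct_pos_of_mem hv hvn
    have hkm : ct n D c v ≤ mcol n lam c := by
      rw [← hD.2.1 c hc1]
      exact ct_antitone hv1
    have hmn : mcol n lam c ≤ n := mcol_le
    have hsh : (c, n + 1 - ct n D c v) ∈ compDiagram n lam := by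
      rw [mem_comp_iff hinc hc1 (by omega) (by omega)]
      omega
    refine ⟨n + 1 - ct n D c v, hsh, ?_⟩
    rw [toT, if_pos hsh]
    simp only
    have : n + 1 - (n + 1 - ct n D c v) = ct n D c v := by omega
    rw [this]
    exact rowOf_eq hD hv rfl

theorem toT_fromT {T : Cell → ℕ} (hT : IsSSRT n lam T) : toT n lam (fromT n lam T) = T := by
  funext p
  by_cases hp : p ∈ compDiagram n lam
  · obtain ⟨c, y⟩ := p
    have hmem : (c, T (c, y)) ∈ fromT n lam T := mem_fromT.mpr ⟨y, hp, rfl⟩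
    obtain ⟨hc1, hcl, hy1, hyn⟩ := mem_comp'.mp hp
    have hct : ct n (fromT n lam T) c (T (c, y)) = n + 1 - y := by
      rw [ct_fromT hT]
      have hset : (Finset.Icc 1 n).filter
            (fun y' => (c, y') ∈ compDiagram n lam ∧ T (c, y) ≤ T (c, y'))
          = Finset.Icc y n := by
        apply Finset.ext
        intro y'
        rw [Finset.mem_filter, Finset.mem_Icc, Finset.mem_Icc]
        constructor
        · rintro ⟨⟨hy'1, hy'n⟩, hsh', hle⟩
          refine ⟨?_, hy'n⟩
          by_contra hlt
          push_neg at hlt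
          exact absurd hle (by
            have := hT.2.2.2 c y' y hsh' hp hlt
            omega)
        · rintro ⟨hyy', hy'n⟩
          have hsh' : (c, y') ∈ compDiagram n lam := by
            rw [mem_comp']
            refine ⟨hc1, ?_, by omega, hy'n⟩
            have := (lam_iff_mcol hinc hy1 hyn).mp hcl
            rw [lam_iff_mcol hinc (by omega) hy'n]
            omega
          refine ⟨⟨by omega, hy'n⟩, hsh', ?_⟩
          rcases eq_or_lt_of_le hyy' with rfl | hlt
          · exact le_refl _
          · exact le_of_lt (hT.2.2.2 c y y' hp hsh' hlt)
      rw [hset, Nat.card_Icc]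
    rw [toT, if_pos hp]
    simp only
    exact rowOf_eq (inv_fromT hT) hmem hct
  · rw [toT, if_neg hp, hT.1 p hp]

end Bijection
end KSB

/-- For a partition `lam` (a weakly increasing weak composition of length `n`),
the Kohnert diagrams of `lam` are in weight-preserving bijection with the
semistandard reverse tableaux of shape `lam`; consequently, for every weight
the number of Kohnert diagrams of that weight equals the number of tableaux of
that weight, i.e. the Kohnert generating polynomial of `lam` equals the Schur
polynomial `s_lam(x_1, …, x_n)`. -/
theorem kohnert_ssrt_bijection (n : ℕ) (lam : ℕ → ℕ)
    (hinc : ∀ i j : ℕ, 1 ≤ i → i ≤ j → j ≤ n → lam i ≤ lam j) :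
    (∃ e : {D : Diagram // D ∈ KD n lam} ≃ {T : Cell → ℕ // IsSSRT n lam T},
      ∀ D : {D : Diagram // D ∈ KD n lam}, ∀ i : ℕ,
        rowWt D.val i = tabWt n lam (e D).val i) ∧
    (∀ w : ℕ → ℕ,
      {D : Diagram | D ∈ KD n lam ∧ ∀ i, rowWt D i = w i}.ncard =
      {T : Cell → ℕ | IsSSRT n lam T ∧ ∀ i, tabWt n lam T i = w i}.ncard) := by
  constructor
  · refine ⟨{
      toFun := fun D => ⟨KSB.toT n lam D.val, KSB.ssrt_toT hinc (KSB.inv_of_KD D.2)⟩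
      invFun := fun T => ⟨KSB.fromT n lam T.val,
        KSB.KD_of_inv hinc (KSB.inv_fromT T.2)⟩
      left_inv := fun D => Subtype.ext (KSB.fromT_toT hinc (KSB.inv_of_KD D.2))
      right_inv := fun T => Subtype.ext (KSB.toT_fromT hinc T.2) }, ?_⟩
    intro D i
    exact KSB.wt_toT hinc (KSB.inv_of_KD D.2) i
  · intro w
    have hinj : Set.InjOn (KSB.toT n lam)
        {D : Diagram | D ∈ KD n lam ∧ ∀ i, rowWt D i = w i} := by
      intro D1 h1 D2 h2 heq
      rw [← KSB.fromT_toT hinc (KSB.inv_of_KD h1.1), heq,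
        KSB.fromT_toT hinc (KSB.inv_of_KD h2.1)]
    have himg : {T : Cell → ℕ | IsSSRT n lam T ∧ ∀ i, tabWt n lam T i = w i}
        = (KSB.toT n lam) '' {D : Diagram | D ∈ KD n lam ∧ ∀ i, rowWt D i = w i} := by
      ext T
      constructor
      · rintro ⟨hT, hw⟩
        refine ⟨KSB.fromT n lam T, ⟨KSB.KD_of_inv hinc (KSB.inv_fromT hT), ?_⟩,
          KSB.toT_fromT hinc hT⟩
        intro i
        rw [KSB.wt_toT hinc (KSB.inv_fromT hT) i, KSB.toT_fromT hinc hT]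
        exact hw i
      · rintro ⟨D, ⟨hD, hw⟩, rfl⟩
        have hInv := KSB.inv_of_KD hD
        exact ⟨KSB.ssrt_toT hinc hInv,
          fun i => by rw [← KSB.wt_toT hinc hInv i]; exact hw i⟩
    rw [himg, Set.ncard_image_of_injOn hinj]
end

section
/- Every semi-proper labeling of a diagram obtained by applying an exchange labeling is again a semi-proper labeling (with shape either unchanged or changed by the transposition t_{r,s} of the two exchanged parts). -/
/-- A semi-proper labeling `L` of the diagram `D` of shape `α` (a weak
composition, 1-indexed): cells lie in the first quadrant; within each column
`c ≥ 1` the labels are distinct and are exactly the rows `{r ≥ 1 | α r ≥ c}`;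
each label in row `r` is at least `r` (flagged); and cells sharing a label
weakly descend from left to right. -/
def SemiProper (D : Diagram) (α : ℕ → ℕ) (L : Cell → ℕ) : Prop :=
  (∀ p ∈ D, 1 ≤ p.1 ∧ 1 ≤ p.2) ∧
  (∀ c : ℕ, 1 ≤ c →
    Set.InjOn L {p : Cell | p ∈ D ∧ p.1 = c} ∧
    L '' {p : Cell | p ∈ D ∧ p.1 = c} = {r : ℕ | 1 ≤ r ∧ c ≤ α r}) ∧
  (∀ p ∈ D, p.2 ≤ L p) ∧
  (∀ p ∈ D, ∀ q ∈ D, L p = L q → p.1 < q.1 → q.2 ≤ p.2)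

/-- For labels `r < s`, the label `s` touches `r` at column `c`: there is an
`s` in column `c+1` lying weakly below the `r` in column `c`. -/
def TouchesAt (D : Diagram) (L : Cell → ℕ) (r s c : ℕ) : Prop :=
  ∃ p ∈ D, ∃ q ∈ D, p.1 = c ∧ L p = r ∧ q.1 = c + 1 ∧ L q = s ∧ q.2 ≤ p.2

/-- `s` abuts `r` at column `c`: `s` touches `r` at `c` and `s` does not cross
`r`, i.e. no cell labeled `r` lies above the `s` in column `c+1`. -/
def AbutsAt (D : Diagram) (L : Cell → ℕ) (r s c : ℕ) : Prop :=
  TouchesAt D L r s c ∧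
  ∀ q ∈ D, q.1 = c + 1 → L q = s → ∀ p ∈ D, p.1 = c + 1 → L p = r → p.2 ≤ q.2

/-- The exchange labeling `L^c_{r,s}`: swap the labels `r` and `s` in columns
`c+1` through `d`. -/
def exchangeLabel (L : Cell → ℕ) (r s c d : ℕ) : Cell → ℕ :=
  fun p => if c < p.1 ∧ p.1 ≤ d then
    (if L p = r then s else if L p = s then r else L p) else L p

/-- `d` is the defining column bound for the exchange at column `c`: the
leftmost column right of `c` at which `s` again touches `r`, if such a column
exists, and otherwise `d = α s`. -/
def ExchBound (D : Diagram) (L : Cell → ℕ) (α : ℕ → ℕ) (r s c d : ℕ) : Prop :=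
  (c < d ∧ TouchesAt D L r s d ∧ ∀ e, c < e → e < d → ¬ TouchesAt D L r s e) ∨
  ((∀ e, c < e → ¬ TouchesAt D L r s e) ∧ d = α s)

lemma exchange_aux (D : Diagram) (α : ℕ → ℕ) (L : Cell → ℕ) (hL : SemiProper D α L)
    (r s c d : ℕ) (hrs : r < s) (habut : AbutsAt D L r s c)
    (hnt : ∀ e, c < e → e < d → ¬ TouchesAt D L r s e)
    (hcd : c < d) (hds : d ≤ α s)
    (hD : ∀ q ∈ D, q.1 = d + 1 → L q = s → ∃ p ∈ D, p.1 = d ∧ L p = r ∧ q.2 ≤ p.2)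
    (β : ℕ → ℕ)
    (hβ : ∀ e t, 1 ≤ e → 1 ≤ t →
      (e ≤ β t ↔ e ≤ α (if c < e ∧ e ≤ d then Equiv.swap r s t else t))) :
    SemiProper D β (exchangeLabel L r s c d) := by
  obtain ⟨hQ, hcol, hflag, hdesc⟩ := hL
  obtain ⟨⟨p0, hp0D, q0, hq0D, hp0c, hp0L, hq0c, hq0L, hq0le⟩, hcross⟩ := habut
  have hc1 : 1 ≤ c := by have := (hQ p0 hp0D).1; omega
  have hbound : ∀ p ∈ D, 1 ≤ L p ∧ p.1 ≤ α (L p) := by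
    intro p hp
    have h := (hcol p.1 (hQ p hp).1).2
    have hmem : L p ∈ L '' {q : Cell | q ∈ D ∧ q.1 = p.1} := ⟨p, ⟨hp, rfl⟩, rfl⟩
    rw [h] at hmem
    exact hmem
  have hexist : ∀ e t, 1 ≤ e → 1 ≤ t → e ≤ α t →
      ∃ p, p ∈ D ∧ p.1 = e ∧ L p = t := by
    intro e t he ht hat
    have h := (hcol e he).2
    have hmem : t ∈ {r : ℕ | 1 ≤ r ∧ e ≤ α r} := ⟨ht, hat⟩
    rw [← h] at hmem
    obtain ⟨p, ⟨hp, hpe⟩, hLp⟩ := hmem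
    exact ⟨p, hp, hpe, hLp⟩
  have huniq : ∀ p ∈ D, ∀ q ∈ D, p.1 = q.1 → L p = L q → p = q := by
    intro p hp q hq h1 h2
    exact (hcol p.1 (hQ p hp).1).1 ⟨hp, rfl⟩ ⟨hq, h1.symm⟩ h2
  have hr1 : 1 ≤ r := by have := (hbound p0 hp0D).1; omega
  have hs1 : 1 ≤ s := by have := (hbound q0 hq0D).1; omega
  have hαr : c ≤ α r := by have := (hbound p0 hp0D).2; rw [hp0L] at this; omega
  have hαs : c + 1 ≤ α s := by have := (hbound q0 hq0D).2; rw [hq0L] at this; omega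
  have gdesc : ∀ p ∈ D, ∀ q ∈ D, L p = L q → p.1 ≤ q.1 → q.2 ≤ p.2 := by
    intro p hp q hq hL' hle
    rcases eq_or_lt_of_le hle with h | h
    · have : p = q := huniq p hp q hq h hL'
      rw [this]
    · exact hdesc p hp q hq hL' h
  have sdesc : ∀ q ∈ D, L q = s → c + 1 ≤ q.1 → q.2 ≤ q0.2 := by
    intro q hq hLq hcq
    exact gdesc q0 hq0D q hq (by rw [hq0L, hLq]) (by omega)
  have hsrow : ∀ p ∈ D, L p = s → c < p.1 → p.2 ≤ r := by
    intro p hp hLp hcp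
    have h1 : p.2 ≤ q0.2 := sdesc p hp hLp (by omega)
    have h2 := hflag p0 hp0D
    omega
  -- in each column c < e ≤ d, the r-cell is weakly above the s-cell
  have hRS : ∀ e, c < e → e ≤ d → ∀ p ∈ D, p.1 = e → L p = r →
      ∀ q ∈ D, q.1 = e → L q = s → p.2 ≤ q.2 := by
    intro e hce hed p hp hpe hpr q hq hqe hqs
    rcases eq_or_lt_of_le (show c + 1 ≤ e from hce) with heq | hlt
    · exact hcross q hq (by omega) hqs p hp (by omega) hpr
    · obtain ⟨e', rfl⟩ : ∃ e', e = e' + 1 := ⟨e - 1, by omega⟩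
      have her : e' + 1 ≤ α r := by
        have := (hbound p hp).2; rw [hpr] at this; omega
      obtain ⟨p', hp'D, hp'c, hp'L⟩ := hexist e' r (by omega) hr1 (by omega)
      have hq2 : ¬ q.2 ≤ p'.2 := by
        intro hle
        exact hnt e' (by omega) (by omega) ⟨p', hp'D, q, hq, hp'c, hp'L, hqe, hqs, hle⟩
      have h3 : p.2 ≤ p'.2 := gdesc p' hp'D p hp (by rw [hp'L, hpr]) (by omega)
      omega
  -- an r-cell beyond column d lies weakly below the s-cell in column d
  have hRjunc : ∀ p ∈ D, d < p.1 → L p = r → ∀ q ∈ D, q.1 = d → L q = s → p.2 ≤ q.2 := by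
    intro p hp hdp hLp q hq hqc hLq
    have hdr : d ≤ α r := by have := (hbound p hp).2; rw [hLp] at this; omega
    obtain ⟨p'', hp''D, hp''c, hp''L⟩ := hexist d r (by omega) hr1 hdr
    have h1 : p.2 ≤ p''.2 := gdesc p'' hp''D p hp (by rw [hp''L, hLp]) (by omega)
    have h2 : p''.2 ≤ q.2 := hRS d hcd le_rfl p'' hp''D hp''c hp''L q hq hqc hLq
    omega
  set M := exchangeLabel L r s c d with hM
  have hMin : ∀ p : Cell, c < p.1 → p.1 ≤ d → M p = Equiv.swap r s (L p) := by
    intro p h1 h2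
    simp only [hM, exchangeLabel, if_pos (And.intro h1 h2), Equiv.swap_apply_def]
  have hMout : ∀ p : Cell, ¬ (c < p.1 ∧ p.1 ≤ d) → M p = L p := by
    intro p h
    simp only [hM, exchangeLabel, if_neg h]
  have hone : ∀ t : ℕ, 1 ≤ Equiv.swap r s t ↔ 1 ≤ t := by
    intro t
    by_cases h1 : t = r
    · subst h1; rw [Equiv.swap_apply_left]; exact ⟨fun _ => hr1, fun _ => hs1⟩
    by_cases h2 : t = s
    · subst h2; rw [Equiv.swap_apply_right]; exact ⟨fun _ => hs1, fun _ => hr1⟩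
    · rw [Equiv.swap_apply_of_ne_of_ne h1 h2]
  refine ⟨hQ, ?_, ?_, ?_⟩
  · -- column condition
    intro e he
    have hinj := (hcol e he).1
    have himg := (hcol e he).2
    by_cases hreg : c < e ∧ e ≤ d
    · constructor
      · intro p hp q hq h
        rw [hMin p (by rw [hp.2]; exact hreg.1) (by rw [hp.2]; exact hreg.2),
            hMin q (by rw [hq.2]; exact hreg.1) (by rw [hq.2]; exact hreg.2)] at h
        exact hinj hp hq ((Equiv.swap r s).injective h)
      · have h1 : M '' {p : Cell | p ∈ D ∧ p.1 = e}
            = (⇑(Equiv.swap r s) ∘ L) '' {p : Cell | p ∈ D ∧ p.1 = e} :=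
          Set.image_congr (fun p hp =>
            hMin p (by rw [hp.2]; exact hreg.1) (by rw [hp.2]; exact hreg.2))
        rw [h1, Set.image_comp, himg]
        ext t
        simp only [Set.mem_image, Set.mem_setOf_eq]
        constructor
        · rintro ⟨u, ⟨hu1, hu2⟩, rfl⟩
          refine ⟨(hone u).mpr hu1, ?_⟩
          have hβ' := hβ e (Equiv.swap r s u) he ((hone u).mpr hu1)
          rw [if_pos hreg] at hβ'
          rw [hβ', Equiv.swap_apply_self]
          exact hu2
        · rintro ⟨ht1, ht2⟩
          have hβ' := hβ e t he ht1
          rw [if_pos hreg] at hβ'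
          exact ⟨Equiv.swap r s t, ⟨(hone t).mpr ht1, hβ'.mp ht2⟩, Equiv.swap_apply_self ..⟩
    · constructor
      · intro p hp q hq h
        rw [hMout p (by rw [hp.2]; exact hreg), hMout q (by rw [hq.2]; exact hreg)] at h
        exact hinj hp hq h
      · have h1 : M '' {p : Cell | p ∈ D ∧ p.1 = e}
            = L '' {p : Cell | p ∈ D ∧ p.1 = e} :=
          Set.image_congr (fun p hp => hMout p (by rw [hp.2]; exact hreg))
        rw [h1, himg]
        ext t
        simp only [Set.mem_setOf_eq]
        constructor
        · rintro ⟨ht1, ht2⟩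
          refine ⟨ht1, ?_⟩
          have hβ' := hβ e t he ht1
          rw [if_neg hreg] at hβ'
          exact hβ'.mpr ht2
        · rintro ⟨ht1, ht2⟩
          refine ⟨ht1, ?_⟩
          have hβ' := hβ e t he ht1
          rw [if_neg hreg] at hβ'
          exact hβ'.mp ht2
  · -- flagged
    intro p hp
    by_cases hreg : c < p.1 ∧ p.1 ≤ d
    · rw [hMin p hreg.1 hreg.2]
      by_cases h1 : L p = r
      · rw [h1, Equiv.swap_apply_left]
        have := hflag p hp; omega
      by_cases h2 : L p = s
      · rw [h2, Equiv.swap_apply_right]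
        exact hsrow p hp h2 hreg.1
      · rw [Equiv.swap_apply_of_ne_of_ne h1 h2]
        exact hflag p hp
    · rw [hMout p hreg]
      exact hflag p hp
  · -- descending
    intro p hp q hq hMeq hlt
    by_cases hpr' : c < p.1 ∧ p.1 ≤ d <;> by_cases hqr' : c < q.1 ∧ q.1 ≤ d
    · rw [hMin p hpr'.1 hpr'.2, hMin q hqr'.1 hqr'.2] at hMeq
      exact hdesc p hp q hq ((Equiv.swap r s).injective hMeq) hlt
    · -- p in region, q beyond d
      have hdq : d < q.1 := by
        by_contra h
        exact hqr' ⟨by omega, by omega⟩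
      rw [hMin p hpr'.1 hpr'.2, hMout q hqr'] at hMeq
      by_cases h1 : L p = r
      · have hLq : L q = s := by rw [← hMeq, h1, Equiv.swap_apply_left]
        have hq1 : q.1 ≤ α s := by have := (hbound q hq).2; rw [hLq] at this; omega
        obtain ⟨qd, hqdD, hqdc, hqdL⟩ := hexist (d + 1) s (by omega) hs1 (by omega)
        obtain ⟨pd, hpdD, hpdc, hpdL, hqdpd⟩ := hD qd hqdD hqdc hqdL
        have hA : q.2 ≤ qd.2 := gdesc qd hqdD q hq (by rw [hqdL, hLq]) (by omega)
        have hB : pd.2 ≤ p.2 := gdesc p hp pd hpdD (by rw [h1, hpdL]) (by omega)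
        omega
      by_cases h2 : L p = s
      · have hLq : L q = r := by rw [← hMeq, h2, Equiv.swap_apply_right]
        obtain ⟨qd2, hqd2D, hqd2c, hqd2L⟩ := hexist d s (by omega) hs1 hds
        have hA : q.2 ≤ qd2.2 := hRjunc q hq hdq hLq qd2 hqd2D hqd2c hqd2L
        have hB : qd2.2 ≤ p.2 := gdesc p hp qd2 hqd2D (by rw [h2, hqd2L]) (by omega)
        omega
      · rw [Equiv.swap_apply_of_ne_of_ne h1 h2] at hMeq
        exact hdesc p hp q hq hMeq hlt
    · -- p before region, q in region
      have hpc : p.1 ≤ c := by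
        by_contra h
        exact hpr' ⟨by omega, by omega⟩
      rw [hMout p hpr', hMin q hqr'.1 hqr'.2] at hMeq
      by_cases h1 : L q = r
      · have hLp : L p = s := by rw [hMeq, h1, Equiv.swap_apply_left]
        obtain ⟨q', hq'D, hq'c, hq'L⟩ := hexist q.1 s (by omega) hs1 (by omega)
        have hA : q.2 ≤ q'.2 := hRS q.1 hqr'.1 hqr'.2 q hq rfl h1 q' hq'D hq'c hq'L
        have hB : q'.2 ≤ p.2 := hdesc p hp q' hq'D (by rw [hLp, hq'L]) (by omega)
        omega
      by_cases h2 : L q = s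
      · have hLp : L p = r := by rw [hMeq, h2, Equiv.swap_apply_right]
        have hA : q.2 ≤ q0.2 := sdesc q hq h2 (by omega)
        have hB : p0.2 ≤ p.2 := gdesc p hp p0 hp0D (by rw [hLp, hp0L]) (by omega)
        omega
      · rw [Equiv.swap_apply_of_ne_of_ne h1 h2] at hMeq
        exact hdesc p hp q hq hMeq hlt
    · rw [hMout p hpr', hMout q hqr'] at hMeq
      exact hdesc p hp q hq hMeq hlt

/-- Exchange labelings of semi-proper labelings are semi-proper, of shape `α`
or of shape `t_{r,s} α`. -/
theorem exchange_semiProper (D : Diagram) (α : ℕ → ℕ) (L : Cell → ℕ)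
    (hL : SemiProper D α L) (r s c d : ℕ) (hrs : r < s)
    (habut : AbutsAt D L r s c) (hd : ExchBound D L α r s c d) :
    SemiProper D α (exchangeLabel L r s c d) ∨
    SemiProper D (fun i => α (Equiv.swap r s i)) (exchangeLabel L r s c d) := by
  obtain ⟨hQ, hcol, hflag, hdesc⟩ := id hL
  obtain ⟨p0, hp0D, q0, hq0D, hp0c, hp0L, hq0c, hq0L, hq0le⟩ := habut.1
  have hbound : ∀ p ∈ D, 1 ≤ L p ∧ p.1 ≤ α (L p) := by
    intro p hp
    have h := (hcol p.1 (hQ p hp).1).2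
    have hmem : L p ∈ L '' {q : Cell | q ∈ D ∧ q.1 = p.1} := ⟨p, ⟨hp, rfl⟩, rfl⟩
    rw [h] at hmem
    exact hmem
  have huniq : ∀ p ∈ D, ∀ q ∈ D, p.1 = q.1 → L p = L q → p = q := by
    intro p hp q hq h1 h2
    exact (hcol p.1 (hQ p hp).1).1 ⟨hp, rfl⟩ ⟨hq, h1.symm⟩ h2
  have hαr : c ≤ α r := by have := (hbound p0 hp0D).2; rw [hp0L] at this; omega
  have hαs : c + 1 ≤ α s := by have := (hbound q0 hq0D).2; rw [hq0L] at this; omega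
  rcases hd with ⟨hcd, htd, hnt⟩ | ⟨hnt2, hdeq⟩
  · left
    obtain ⟨pd, hpdD, qd, hqdD, hpdc, hpdL, hqdc, hqdL, hqdle⟩ := htd
    have hαrd : d ≤ α r := by
      have := (hbound pd hpdD).2; rw [hpdL] at this; omega
    have hαsd : d + 1 ≤ α s := by
      have := (hbound qd hqdD).2; rw [hqdL] at this; omega
    refine exchange_aux D α L hL r s c d hrs habut hnt hcd (by omega) ?_ α ?_
    · intro q hq hqc hqL
      have hqe : q = qd := huniq q hq qd hqdD (by rw [hqc, hqdc]) (by rw [hqL, hqdL])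
      exact ⟨pd, hpdD, hpdc, hpdL, by rw [hqe]; exact hqdle⟩
    · intro e t he ht
      split_ifs with hreg
      · by_cases h1 : t = r
        · subst h1; rw [Equiv.swap_apply_left]; constructor <;> intro <;> omega
        by_cases h2 : t = s
        · subst h2; rw [Equiv.swap_apply_right]; constructor <;> intro <;> omega
        · rw [Equiv.swap_apply_of_ne_of_ne h1 h2]
      · exact Iff.rfl
  · subst hdeq
    have hnt : ∀ e, c < e → e < α s → ¬ TouchesAt D L r s e := fun e h _ => hnt2 e h
    have hD : ∀ q ∈ D, q.1 = α s + 1 → L q = s →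
        ∃ p ∈ D, p.1 = α s ∧ L p = r ∧ q.2 ≤ p.2 := by
      intro q hq hqc hqL
      have := (hbound q hq).2
      rw [hqL] at this
      exact absurd hqc (by omega)
    by_cases hαcmp : α r ≤ α s
    · right
      refine exchange_aux D α L hL r s c (α s) hrs habut hnt (by omega) le_rfl hD
        (fun i => α (Equiv.swap r s i)) ?_
      intro e t he ht
      split_ifs with hreg
      · exact Iff.rfl
      · by_cases h1 : t = r
        · subst h1; simp only [Equiv.swap_apply_left]; constructor <;> intro <;> omega
        by_cases h2 : t = s
        · subst h2; simp only [Equiv.swap_apply_right]; constructor <;> intro <;> omega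
        · simp only [Equiv.swap_apply_of_ne_of_ne h1 h2]
    · left
      refine exchange_aux D α L hL r s c (α s) hrs habut hnt (by omega) le_rfl hD α ?_
      intro e t he ht
      split_ifs with hreg
      · by_cases h1 : t = r
        · subst h1; rw [Equiv.swap_apply_left]; constructor <;> intro <;> omega
        by_cases h2 : t = s
        · subst h2; rw [Equiv.swap_apply_right]; constructor <;> intro <;> omega
        · rw [Equiv.swap_apply_of_ne_of_ne h1 h2]
      · exact Iff.rfl
end

section
/- If β is k-positive and (c, r) is a k-addable position for β, then the k-addition β +⁽ᵏ⁾ (c, r) is again k-positive. -/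
/-!
The product of transpositions is the cycle `ρ 0 ↦ ρ q ↦ ρ (q-1) ↦ ⋯ ↦ ρ 1 ↦ ρ 0`. Every `ρ j`
with `j ≠ 0` carries a value in `(β r, c)`, which addability forbids between `r` and `k`, so the
cycle lives on `r` and on positions beyond `k`. Hence `γ` agrees with `β` up to `k` except at
`r`, where it takes the value `β (ρ q) + 1 = c`, and every value of `γ` beyond `k` is bounded by
a value of `β` beyond `k`. Positivity transfers, because no entry between `r` and `k` lies in
the range `[β r, c)` that the raised entry jumps over.
-/

/-- `β` is `k`-positive: whenever `β r ≤ β t` for 1-based indices `r ≤ k < t`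
(an index `i : Fin n` encodes the 1-based index `i+1`), we have `β s ≥ β r`
for all `r < s ≤ k`. -/
def KPositive {n : ℕ} (k : ℕ) (β : Fin n → ℕ) : Prop :=
  ∀ r t : Fin n, (r : ℕ) + 1 ≤ k → k ≤ (t : ℕ) → β r ≤ β t →
    ∀ s : Fin n, r < s → (s : ℕ) + 1 ≤ k → β r ≤ β s

/-- `(c, r)` is a `k`-addable position for `β`. -/
def KAddable {n : ℕ} (k : ℕ) (β : Fin n → ℕ) (c : ℕ) (r : Fin n) : Prop :=
  (r : ℕ) + 1 ≤ k ∧ 1 ≤ c ∧ β r < c ∧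
  (β r < c - 1 → ∃ t : Fin n, k ≤ (t : ℕ) ∧ β t = c - 1) ∧
  (∀ s : Fin n, r < s → (s : ℕ) + 1 ≤ k → (β s < β r ∨ c ≤ β s))

open Equiv MulAction

section SwapChain

variable {α : Type*} [DecidableEq α] {q : ℕ}

def swapChain (ρ : Fin (q + 1) → α) : Perm α :=
  (List.ofFn fun j : Fin q => swap (ρ 0) (ρ j.succ)).prod

theorem swapChain_mem_fixingSubgroup_compl (ρ : Fin (q + 1) → α) :
    swapChain ρ ∈ fixingSubgroup (Perm α) (Set.range ρ)ᶜ := by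
  refine Subgroup.list_prod_mem _ fun g hg => ?_
  obtain ⟨j, rfl⟩ := List.mem_ofFn.mp hg
  refine (mem_fixingSubgroup_iff _).mpr fun y hy => swap_apply_of_ne_of_ne ?_ ?_
  · exact fun h => hy ⟨0, h.symm⟩
  · exact fun h => hy ⟨j.succ, h.symm⟩

theorem swapChain_apply_of_notMem_range {ρ : Fin (q + 1) → α} {x : α} (hx : x ∉ Set.range ρ) :
    swapChain ρ x = x :=
  (mem_fixingSubgroup_iff _).mp (swapChain_mem_fixingSubgroup_compl ρ) x hx

theorem swapChain_apply_mem_range (ρ : Fin (q + 1) → α) (j : Fin (q + 1)) :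
    swapChain ρ (ρ j) ∈ Set.range ρ :=
  orbit_fixingSubgroup_compl_subset (Perm α) α (Set.mem_range_self j)
    (mem_orbit (ρ j) (⟨_, swapChain_mem_fixingSubgroup_compl ρ⟩ :
      fixingSubgroup (Perm α) (Set.range ρ)ᶜ))

theorem swapChain_apply_zero {ρ : Fin (q + 1) → α} (hρ : Function.Injective ρ) :
    swapChain ρ (ρ 0) = ρ (Fin.last q) := by
  cases q with
  | zero => rfl
  | succ m =>
    rw [swapChain, List.ofFn_succ', List.prod_concat, Perm.mul_apply, Fin.succ_last,
      swap_apply_left]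
    exact swapChain_apply_of_notMem_range (ρ := ρ ∘ Fin.castSucc)
      fun ⟨j, hj⟩ => (Fin.castSucc_lt_last j).ne (hρ hj)

theorem exists_ge_apply_swapChain_le [Preorder α] {δ : Type*} [Preorder δ] {f : α → δ}
    {ρ : Fin (q + 1) → α} (hmono : Monotone ρ) (hvals : Monotone fun i => f (ρ i)) (t : α) :
    ∃ u, t ≤ u ∧ f (swapChain ρ t) ≤ f u := by
  by_cases ht : t ∈ Set.range ρ
  · obtain ⟨j, rfl⟩ := ht
    obtain ⟨j', hj'⟩ := swapChain_apply_mem_range ρ j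
    exact ⟨ρ (Fin.last q), hmono (Fin.le_last j), hj' ▸ hvals (Fin.le_last j')⟩
  · exact ⟨t, le_rfl, (congrArg f (swapChain_apply_of_notMem_range ht)).le⟩

end SwapChain

section KPositive

variable {n k : ℕ}

theorem KAddable.le_of_chain {β : Fin n → ℕ} {c q : ℕ} {ρ : Fin (q + 1) → Fin n}
    (h : KAddable k β c (ρ 0)) (hmono : StrictMono ρ) (hvals : StrictMono fun i => β (ρ i))
    (hlast : β (ρ (Fin.last q)) = c - 1) {j : Fin (q + 1)} (hj : j ≠ 0) : k ≤ (ρ j : ℕ) := by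
  obtain ⟨-, hc, -, -, hside⟩ := h
  have h0j := Fin.pos_of_ne_zero hj
  have hlt : β (ρ 0) < β (ρ j) := hvals h0j
  have hle : β (ρ j) ≤ β (ρ (Fin.last q)) := hvals.monotone (Fin.le_last j)
  by_contra! hjk
  rcases hside (ρ j) (hmono h0j) (by omega) with h | h <;> omega

theorem KPositive.of_raise {β γ : Fin n → ℕ} {r : Fin n} (hβ : KPositive k β) (hr : β r ≤ γ r)
    (hside : ∀ s : Fin n, r < s → (s : ℕ) + 1 ≤ k → β s < β r ∨ γ r ≤ β s)
    (hbelow : ∀ i : Fin n, (i : ℕ) + 1 ≤ k → i ≠ r → γ i = β i)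
    (habove : ∀ t : Fin n, k ≤ (t : ℕ) → ∃ u : Fin n, k ≤ (u : ℕ) ∧ γ t ≤ β u) :
    KPositive k γ := by
  intro a t hak hkt hat s has hsk
  obtain ⟨u, hku, htu⟩ := habove t hkt
  by_cases ha : a = r
  · subst ha
    have hβs := hβ a u hak hku (by omega) s has hsk
    rw [hbelow s hsk has.ne']
    rcases hside s has hsk with h | h <;> omega
  · rw [hbelow a hak ha] at hat ⊢
    have hβs := hβ a u hak hku (by omega) s has hsk
    by_cases hs : s = r
    · subst hs
      omega
    · rwa [hbelow s hsk hs]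

end KPositive

theorem kAddition_kPositive_general {n k : ℕ} (β : Fin n → ℕ) (c : ℕ) (r : Fin n)
    (hpos : KPositive k β) (hadd : KAddable k β c r)
    (q : ℕ) (ρ : Fin (q+1) → Fin n)
    (h0 : ρ 0 = r) (hmono : StrictMono ρ)
    (hvals : StrictMono (fun i => β (ρ i)))
    (hlast : β (ρ (Fin.last q)) = c - 1)
    (γ : Fin n → ℕ)
    (hγ : γ = fun i =>
      β (((List.ofFn fun j : Fin q => Equiv.swap r (ρ j.succ)).prod) i) +
        (if i = r then 1 else 0)) :
    KPositive k γ := by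
  subst h0
  replace hγ : γ = fun i => β (swapChain ρ i) + if i = ρ 0 then 1 else 0 := hγ
  subst hγ
  have htail {j : Fin (q + 1)} (hj : j ≠ 0) := hadd.le_of_chain hmono hvals hlast hj
  obtain ⟨hrk, hc, hrc, -, hside⟩ := hadd
  have hγ0 : β (swapChain ρ (ρ 0)) + 1 = c := by
    rw [swapChain_apply_zero hmono.injective, hlast]
    omega
  refine hpos.of_raise (r := ρ 0) ?_ ?_ ?_ ?_
  · simpa only [if_pos, hγ0] using hrc.le
  · simpa only [if_pos, hγ0] using hside
  · intro i hik hi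
    have hiρ : i ∉ Set.range ρ := by
      rintro ⟨j, rfl⟩
      have := htail fun hj => hi (congrArg ρ hj)
      omega
    simp [hi, swapChain_apply_of_notMem_range hiρ]
  · intro t hkt
    have ht0 : t ≠ ρ 0 := by
      rintro rfl
      omega
    obtain ⟨u, htu, hu⟩ := exists_ge_apply_swapChain_le hmono.monotone hvals.monotone t
    exact ⟨u, hkt.trans htu, by simpa [ht0] using hu⟩

/-- If `β` is `k`-positive and `(c, r)` is `k`-addable, then the `k`-addition
`β +⁽ᵏ⁾ (c, r) = t_{r₀,r_q} ⋯ t_{r₀,r₁} β + e_r` (with defining sequence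
`r = ρ 0 < ρ 1 < ⋯ < ρ q`, increasing values `β (ρ 0) < ⋯ < β (ρ q) = c − 1`,
and the gap condition) is again `k`-positive. -/
theorem kAddition_kPositive {n k : ℕ} (β : Fin n → ℕ) (c : ℕ) (r : Fin n)
    (hpos : KPositive k β) (hadd : KAddable k β c r)
    (q : ℕ) (ρ : Fin (q+1) → Fin n)
    (h0 : ρ 0 = r) (hmono : StrictMono ρ)
    (hvals : StrictMono (fun i => β (ρ i)))
    (hlast : β (ρ (Fin.last q)) = c - 1)
    (hgap : ∀ i : Fin q, ∀ s : Fin n, ρ i.castSucc < s → s < ρ i.succ →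
      β s ≤ β (ρ i.castSucc) ∨ β (ρ i.succ) < β s)
    (γ : Fin n → ℕ)
    (hγ : γ = fun i =>
      β (((List.ofFn fun j : Fin q => Equiv.swap r (ρ j.succ)).prod) i) +
        (if i = r then 1 else 0)) :
    KPositive k γ :=
  kAddition_kPositive_general β c r hpos hadd q ρ h0 hmono hvals hlast γ hγ
end

section
/- A k-positive weak composition β has at most one k-addable position in each column c. -/
/-- A `k`-positive weak composition has at most one `k`-addable position in
each column `c`. -/
theorem kPositive_unique_addable {n k : ℕ} (β : Fin n → ℕ)
    (hpos : KPositive k β) (c : ℕ) (r r' : Fin n)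
    (h : KAddable k β c r) (h' : KAddable k β c r') : r = r' := by
  obtain ⟨hrk, hc, hrc, hex, hall⟩ := h
  obtain ⟨hrk', hc', hrc', hex', hall'⟩ := h'
  by_contra hne
  rcases lt_trichotomy r r' with hlt | heq | hlt
  · have h1 : β r' < β r := by
      rcases hall r' hlt hrk' with h2 | h2
      · exact h2
      · omega
    have h2 : β r' < c - 1 := by omega
    obtain ⟨t, hkt, hbt⟩ := hex' h2
    have := hpos r t hrk hkt (by omega) r' hlt hrk'
    omega
  · exact hne heq
  · have h1 : β r < β r' := by
      rcases hall' r hlt hrk with h2 | h2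
      · exact h2
      · omega
    have h2 : β r < c - 1 := by omega
    obtain ⟨t, hkt, hbt⟩ := hex h2
    have := hpos r' t hrk' hkt (by omega) r hlt hrk
    omega
end

section
/- For any weak composition α of length n and any weak composition γ of length n with α ⪯ γ, there exists a unique maximal β (with respect to ⪯) such that α ⪯⁰ β and β ⪯ γ. -/
/-- A single pinned left swap: exchanging two *nonzero* parts `0 < β i < β j`
with `i < j`. -/
def PinnedSwapStep {n : ℕ} (β α : Fin n → ℕ) : Prop :=
  ∃ i j : Fin n, i < j ∧ 0 < β i ∧ β i < β j ∧ α = fun l => β (Equiv.swap i j l)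

/-- `α ⪯⁰ β`: reflexive-transitive closure of pinned left swaps. -/
def PinnedSwapLE {n : ℕ} (α β : Fin n → ℕ) : Prop :=
  Relation.ReflTransGen PinnedSwapStep β α

/-!
Write `countGE x 0 k t` for the number of parts `≥ t` among the first `k` parts of `x`. Then
`x ⪯ y` iff `x` and `y` have the same parts and all counts of `y` are at most those of `x`
(`Dominates x y`): a left swap only raises counts, and conversely, at the first position `i` where
`x` and `y` differ one has `y i < x i`, and exchanging `y i` with the nearest later part of `y` in
`(y i, x i]` is a left swap keeping all counts below those of `x`. If `x` and `y` have the same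
zero parts, this swap is pinned, so `x ⪯⁰ y`.

If `α ⪯⁰ β ⪯ γ`, then `β` has the zero parts of `α` and dominates `γ`, so for `k ≤ k' ≤ n`
`countGE β 0 k t ≥ countGE γ 0 k' t - #{l ∈ [k, k') | α l ≠ 0}`. The maximum `minCount α γ k t` of
these bounds grows by `0` or `1` from `k` to `k + 1`, and for fixed `k` the `t` where it grows form
an initial segment; so it is the count profile of a composition `maxPinned α γ` with the zero
parts of `α`, which is therefore the largest such `β`. Uniqueness is antisymmetry of `⪯`:
`∑ l * x l` drops at every left swap.
-/

open Finset

namespace PinnedSwap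

theorem sum_comp_swap_add {ι β M : Type*} [Fintype ι] [DecidableEq ι] [AddCommMonoid M]
    (φ : ι → β → M) (z : ι → β) {r s : ι} (hrs : r ≠ s) :
    ∑ l, φ l (z (Equiv.swap r s l)) + (φ r (z r) + φ s (z s)) =
      ∑ l, φ l (z l) + (φ r (z s) + φ s (z r)) := by
  have hcompl : ∑ l ∈ {r, s}ᶜ, φ l (z (Equiv.swap r s l)) = ∑ l ∈ {r, s}ᶜ, φ l (z l) :=
    sum_congr rfl fun l hl => by
      simp only [mem_compl, mem_insert, mem_singleton, not_or] at hl
      rw [Equiv.swap_apply_of_ne_of_ne hl.1 hl.2]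
  rw [← sum_add_sum_compl {r, s}, ← sum_add_sum_compl {r, s} (fun l => φ l (z l)), hcompl,
    sum_pair hrs, sum_pair hrs, Equiv.swap_apply_left, Equiv.swap_apply_right]
  abel

theorem exists_forall_lt_eq_of_ne {ι β : Type*} [LinearOrder ι] [WellFoundedLT ι]
    {x y : ι → β} (h : x ≠ y) : ∃ i, x i ≠ y i ∧ ∀ l < i, x l = y l := by
  obtain ⟨i, hi, hmin⟩ := wellFounded_lt.has_min {l | x l ≠ y l} (Function.ne_iff.1 h)
  exact ⟨i, hi, fun l hl => not_not.1 fun hne => hmin l hne hl⟩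

theorem le_card_filter_Icc_iff {p : ℕ → Prop} [DecidablePred p] (hp : Antitone p)
    {T t : ℕ} (hT : ∀ u, p u → u ≤ T) (ht : 1 ≤ t) :
    t ≤ #{u ∈ Icc 1 T | p u} ↔ p t := by
  constructor
  · intro hcard
    by_contra hpt
    have hsub : {u ∈ Icc 1 T | p u} ⊆ Icc 1 (t - 1) := fun u hu => by
      simp only [mem_filter, mem_Icc] at hu ⊢
      exact ⟨hu.1.1, Nat.le_sub_one_of_lt (lt_of_not_ge fun htu => hpt (hp htu hu.2))⟩
    have := card_le_card hsub
    simp only [Nat.card_Icc] at this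
    omega
  · intro hpt
    have hsub : Icc 1 t ⊆ {u ∈ Icc 1 T | p u} := fun u hu => by
      simp only [mem_filter, mem_Icc] at hu ⊢
      exact ⟨⟨hu.1, hu.2.trans (hT t hpt)⟩, hp hu.2 hpt⟩
    simpa using card_le_card hsub

theorem reflTransGen_of_exists_step {α : Type*} {r : α → α → Prop} (P : α → Prop) (f : α → ℕ)
    {x : α} (h : ∀ z, P z → z ≠ x → ∃ z', r z z' ∧ P z' ∧ f z' < f z) {z : α} (hz : P z) :
    Relation.ReflTransGen r z x := by
  induction z using (measure f).wf.induction with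
  | h z ih =>
    by_cases hzx : z = x
    · exact hzx ▸ .refl
    obtain ⟨z', hzz', hz', hlt⟩ := h z hz hzx
    exact .head hzz' (ih z' hlt hz')

variable {n : ℕ}

def countGE (x : Fin n → ℕ) (a b t : ℕ) : ℕ :=
  ∑ l : Fin n, if a ≤ (l : ℕ) ∧ (l : ℕ) < b ∧ t ≤ x l then 1 else 0

theorem countGE_add (x : Fin n → ℕ) {a b c : ℕ} (hab : a ≤ b) (hbc : b ≤ c) (t : ℕ) :
    countGE x a b t + countGE x b c t = countGE x a c t := by
  rw [countGE, countGE, countGE, ← sum_add_distrib]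
  exact sum_congr rfl fun l _ => by split_ifs <;> omega

theorem countGE_le_countGE {x y : Fin n → ℕ} {a b t a' b' t' : ℕ}
    (h : ∀ l : Fin n, a ≤ (l : ℕ) → (l : ℕ) < b → t ≤ x l →
      a' ≤ (l : ℕ) ∧ (l : ℕ) < b' ∧ t' ≤ y l) :
    countGE x a b t ≤ countGE y a' b' t' :=
  sum_le_sum fun l _ => by
    split_ifs with hx hy
    · rfl
    · exact absurd (h l hx.1 hx.2.1 hx.2.2) hy
    · exact zero_le_one
    · rfl

theorem countGE_congr {x y : Fin n → ℕ} {a b : ℕ}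
    (h : ∀ l : Fin n, a ≤ (l : ℕ) → (l : ℕ) < b → x l = y l) (t : ℕ) :
    countGE x a b t = countGE y a b t :=
  le_antisymm (countGE_le_countGE fun l ha hb ht => ⟨ha, hb, h l ha hb ▸ ht⟩)
    (countGE_le_countGE fun l ha hb ht => ⟨ha, hb, (h l ha hb).symm ▸ ht⟩)

theorem countGE_of_le (x : Fin n → ℕ) {a b : ℕ} (h : b ≤ a) (t : ℕ) : countGE x a b t = 0 :=
  sum_eq_zero fun l _ => by split_ifs <;> omega

theorem countGE_succ (x : Fin n → ℕ) {a : ℕ} (i : Fin n) (ha : a ≤ i) (t : ℕ) :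
    countGE x a (i + 1) t = countGE x a i t + if t ≤ x i then 1 else 0 := by
  rw [countGE, countGE, ← Fintype.sum_ite_eq' i fun l => if t ≤ x l then 1 else 0,
    ← sum_add_distrib]
  refine sum_congr rfl fun l _ => ?_
  rcases eq_or_ne l i with rfl | hli
  · simp [ha]
  · have : (l : ℕ) ≠ i := Fin.val_ne_of_ne hli
    simp only [hli, if_false]
    split_ifs <;> omega

theorem countGE_eq_add_add (z : Fin n → ℕ) {a k : ℕ} {i : Fin n} (hai : a ≤ i) (hik : (i : ℕ) < k)
    (t : ℕ) :
    countGE z a k t = countGE z a i t + (if t ≤ z i then 1 else 0) + countGE z (i + 1) k t := by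
  rw [← countGE_succ z i hai, countGE_add z (by omega) hik]

theorem countGE_self_succ (x : Fin n → ℕ) (i : Fin n) (t : ℕ) :
    countGE x i (i + 1) t = if t ≤ x i then 1 else 0 := by
  rw [countGE_succ x i le_rfl, countGE_of_le x le_rfl, zero_add]

theorem countGE_add_countGE_le (x : Fin n → ℕ) {k k' t t' : ℕ} (hk : k ≤ k') (ht : t' ≤ t) :
    countGE x 0 k t' + countGE x 0 k' t ≤ countGE x 0 k t + countGE x 0 k' t' := by
  simp only [countGE, ← sum_add_distrib]
  exact sum_le_sum fun l _ => by split_ifs <;> omega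

theorem countGE_comp_swap (x : Fin n → ℕ) {r s : Fin n} (hrs : r < s) (k t : ℕ) :
    countGE (fun l => x (Equiv.swap r s l)) 0 k t +
        ((if (r : ℕ) < k ∧ t ≤ x r then 1 else 0) + if (s : ℕ) < k ∧ t ≤ x s then 1 else 0) =
      countGE x 0 k t +
        ((if (r : ℕ) < k ∧ t ≤ x s then 1 else 0) + if (s : ℕ) < k ∧ t ≤ x r then 1 else 0) := by
  simp only [countGE, Nat.zero_le, true_and]
  exact sum_comp_swap_add (fun (l : Fin n) v => if (l : ℕ) < k ∧ t ≤ v then 1 else 0) x hrs.ne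

theorem countGE_comp_swap_eq_of_le_or_lt (x : Fin n → ℕ) {r s : Fin n} (hrs : r < s) {k : ℕ}
    (hk : k ≤ r ∨ s < k) (t : ℕ) :
    countGE (fun l => x (Equiv.swap r s l)) 0 k t = countGE x 0 k t := by
  have := countGE_comp_swap x hrs k t
  have : (r : ℕ) < s := hrs
  split_ifs at * <;> omega

theorem countGE_comp_swap_add_of_lt_of_le (x : Fin n → ℕ) {r s : Fin n} (hrs : r < s) {k : ℕ}
    (hrk : r < k) (hks : k ≤ s) (t : ℕ) :
    countGE (fun l => x (Equiv.swap r s l)) 0 k t + (if t ≤ x r then 1 else 0) =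
      countGE x 0 k t + if t ≤ x s then 1 else 0 := by
  have := countGE_comp_swap x hrs k t
  split_ifs at * <;> omega

theorem countGE_le_countGE_comp_swap (x : Fin n → ℕ) {r s : Fin n} (hrs : r < s)
    (hx : x r ≤ x s) (k t : ℕ) :
    countGE x 0 k t ≤ countGE (fun l => x (Equiv.swap r s l)) 0 k t := by
  have := countGE_comp_swap x hrs k t
  have : (r : ℕ) < s := hrs
  split_ifs at * <;> omega

def moment (x : Fin n → ℕ) : ℕ := ∑ l : Fin n, (l : ℕ) * x l

theorem moment_lt_of_leftSwapStep {x y : Fin n → ℕ} (h : LeftSwapStep x y) :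
    moment y < moment x := by
  obtain ⟨r, s, hrs, hx, rfl⟩ := h
  have hsum := sum_comp_swap_add (fun (l : Fin n) v => (l : ℕ) * v) x hrs.ne
  have hrs' : (r : ℕ) < s := hrs
  have : (r : ℕ) * x s + s * x r < r * x r + s * x s := by
    nlinarith [Nat.sub_pos_of_lt hrs', Nat.sub_pos_of_lt hx]
  simp only [moment] at hsum ⊢
  omega

theorem moment_le_of_lswapLE {x y : Fin n → ℕ} (h : LSwapLE x y) : moment x ≤ moment y := by
  induction h with
  | refl => exact le_rfl
  | tail _ hstep ih => exact (moment_lt_of_leftSwapStep hstep).le.trans ih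

theorem LSwapLE.antisymm {x y : Fin n → ℕ} (hxy : LSwapLE x y) (hyx : LSwapLE y x) : x = y := by
  rcases Relation.ReflTransGen.cases_head hxy with rfl | ⟨z, hstep, hzx⟩
  · rfl
  · exact absurd ((moment_le_of_lswapLE hyx).trans (moment_le_of_lswapLE hzx))
      (moment_lt_of_leftSwapStep hstep).not_ge

theorem PinnedSwapLE.pos_iff {x y : Fin n → ℕ} (h : PinnedSwapLE x y) (l : Fin n) :
    0 < x l ↔ 0 < y l := by
  induction h with
  | refl => rfl
  | tail _ hstep ih =>
    obtain ⟨r, s, hrs, hr, hv, rfl⟩ := hstep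
    rw [← ih]
    rcases eq_or_ne l r with rfl | hlr
    · simp only [Equiv.swap_apply_left]; omega
    rcases eq_or_ne l s with rfl | hls
    · simp only [Equiv.swap_apply_right]; omega
    · simp only [Equiv.swap_apply_of_ne_of_ne hlr hls]

structure Dominates (x y : Fin n → ℕ) : Prop where
  total_eq : ∀ t, 1 ≤ t → countGE x 0 n t = countGE y 0 n t
  prefix_le : ∀ k ≤ n, ∀ t, 1 ≤ t → countGE y 0 k t ≤ countGE x 0 k t

theorem LSwapLE.dominates {x y : Fin n → ℕ} (h : LSwapLE x y) : Dominates x y := by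
  induction h with
  | refl => exact ⟨fun _ _ => rfl, fun _ _ _ _ => le_rfl⟩
  | tail _ hstep ih =>
    obtain ⟨r, s, hrs, hv, rfl⟩ := hstep
    refine ⟨fun t ht => ?_, fun k hk t ht => ?_⟩
    · rw [← ih.total_eq t ht, countGE_comp_swap_eq_of_le_or_lt _ hrs (.inr s.isLt)]
    · exact (ih.prefix_le k hk t ht).trans (countGE_le_countGE_comp_swap _ hrs hv.le k t)

section Exchange

variable {x y : Fin n → ℕ} {i : Fin n}

theorem countGE_eq_of_forall_lt_eq (hpre : ∀ l < i, x l = y l) {m : ℕ} (hm : m ≤ i) (t : ℕ) :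
    countGE x 0 m t = countGE y 0 m t :=
  countGE_congr (fun l _ hl => hpre l (Fin.lt_def.2 (by omega))) t

theorem Dominates.lt_of_forall_lt_eq (h : Dominates x y) (hpre : ∀ l < i, x l = y l)
    (hi : x i ≠ y i) : y i < x i := by
  have := h.prefix_le (i + 1) i.isLt (x i + 1) (Nat.le_add_left 1 _)
  rw [countGE_succ y i (Nat.zero_le _), countGE_succ x i (Nat.zero_le _),
    countGE_eq_of_forall_lt_eq hpre le_rfl] at this
  split_ifs at this <;> omega

theorem Dominates.exists_eq_of_forall_lt_eq (h : Dominates x y) (hpre : ∀ l < i, x l = y l)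
    (hi : x i ≠ y i) : ∃ j, i < j ∧ y j = x i := by
  have hyx := h.lt_of_forall_lt_eq hpre hi
  have hsuffix (t : ℕ) (ht : 1 ≤ t) : countGE x i n t = countGE y i n t := by
    have := h.total_eq t ht
    rw [← countGE_add x (Nat.zero_le i) i.isLt.le, ← countGE_add y (Nat.zero_le i) i.isLt.le,
      countGE_eq_of_forall_lt_eq hpre le_rfl] at this
    omega
  by_contra! hne
  -- `x` has a part equal to `x i` in `[i, n)`; `y` does not
  have hx : countGE x i n (x i + 1) < countGE x i n (x i) := by
    have h₁ := countGE_eq_add_add x le_rfl i.isLt (x i)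
    have h₂ := countGE_eq_add_add x le_rfl i.isLt (x i + 1)
    have h₃ : countGE x (i + 1) n (x i + 1) ≤ countGE x (i + 1) n (x i) :=
      countGE_le_countGE fun l ha hb ht => ⟨ha, hb, by omega⟩
    simp only [countGE_of_le x le_rfl, le_refl, if_true, Nat.not_succ_le_self, if_false] at h₁ h₂
    omega
  have hy : countGE y i n (x i) ≤ countGE y i n (x i + 1) :=
    countGE_le_countGE fun l ha hb ht => by
      refine ⟨ha, hb, Nat.succ_le_of_lt (lt_of_le_of_ne ht fun he => ?_)⟩
      rcases (Fin.le_def.2 ha).lt_or_eq with hil | rfl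
      · exact hne l hil he.symm
      · exact hi he
  have := hsuffix (x i) (by omega)
  have := hsuffix (x i + 1) (by omega)
  omega

theorem Dominates.countGE_lt (h : Dominates x y) (hpre : ∀ l < i, x l = y l) {k t : ℕ}
    (hik : (i : ℕ) < k) (hk : k ≤ n) (hyt : y i < t) (htx : t ≤ x i)
    (hwin : ∀ l : Fin n, i < l → (l : ℕ) < k → y i < y l → x i < y l) :
    countGE y 0 k t < countGE x 0 k t := by
  have hy := countGE_eq_add_add y (Nat.zero_le _) hik t
  have hx := countGE_eq_add_add x (Nat.zero_le _) hik t
  have hy' := countGE_eq_add_add y (Nat.zero_le _) hik (x i + 1)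
  have hx' := countGE_eq_add_add x (Nat.zero_le _) hik (x i + 1)
  have hdom := h.prefix_le k hk (x i + 1) (Nat.le_add_left 1 _)
  rw [countGE_eq_of_forall_lt_eq hpre le_rfl] at hx hx'
  -- in the window `(i, k)`, every part of `y` that is `≥ t > y i` is already `> x i`
  have hwy : countGE y (i + 1) k t ≤ countGE y (i + 1) k (x i + 1) :=
    countGE_le_countGE fun l ha hb ht => ⟨ha, hb, hwin l (Fin.lt_def.2 ha) hb (by omega)⟩
  have hwx : countGE x (i + 1) k (x i + 1) ≤ countGE x (i + 1) k t :=
    countGE_le_countGE fun l ha hb ht => ⟨ha, hb, by omega⟩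
  split_ifs at hx hy hx' hy' <;> omega

theorem Dominates.comp_swap (h : Dominates x y) (hpre : ∀ l < i, x l = y l) {j : Fin n}
    (hij : i < j) (hyij : y i < y j) (hyjx : y j ≤ x i)
    (hwin : ∀ l : Fin n, i < l → l < j → y i < y l → x i < y l) :
    Dominates x (fun l => y (Equiv.swap i j l)) := by
  refine ⟨fun t ht => ?_, fun k hk t ht => ?_⟩
  · rw [h.total_eq t ht, countGE_comp_swap_eq_of_le_or_lt y hij (.inr j.isLt)]
  by_cases hout : k ≤ i ∨ j < k
  · rw [countGE_comp_swap_eq_of_le_or_lt y hij hout]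
    exact h.prefix_le k hk t ht
  simp only [not_or, not_le, not_lt] at hout
  have hswap := countGE_comp_swap_add_of_lt_of_le y hij hout.1 hout.2 t
  have hdom := h.prefix_le k hk t ht
  rcases le_or_gt t (y i) with hti | hti
  · rw [if_pos hti, if_pos (hti.trans hyij.le)] at hswap
    omega
  rcases le_or_gt t (y j) with htj | htj
  · rw [if_neg hti.not_ge, if_pos htj] at hswap
    have := h.countGE_lt hpre hout.1 hk hti (htj.trans hyjx)
      fun l hil hlk => hwin l hil (Fin.lt_def.2 (by omega))
    omega
  · rw [if_neg hti.not_ge, if_neg htj.not_ge] at hswap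
    omega

theorem Dominates.exists_leftSwap (h : Dominates x y) (hne : x ≠ y) :
    ∃ i j, i < j ∧ y i < y j ∧ y i < x i ∧ Dominates x (fun l => y (Equiv.swap i j l)) := by
  obtain ⟨i, hi, hpre⟩ := exists_forall_lt_eq_of_ne hne
  have hyx := h.lt_of_forall_lt_eq hpre hi
  obtain ⟨j, ⟨hij, hyij, hyjx⟩, hmin⟩ :=
    wellFounded_lt.has_min {j | i < j ∧ y i < y j ∧ y j ≤ x i} <| by
      obtain ⟨j, hij, hj⟩ := h.exists_eq_of_forall_lt_eq hpre hi
      exact ⟨j, hij, hj ▸ hyx, hj.le⟩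
  refine ⟨i, j, hij, hyij, hyx, h.comp_swap hpre hij hyij hyjx fun l hil hlj hyl => ?_⟩
  exact lt_of_not_ge fun hlx => hmin l ⟨hil, hyl, hlx⟩ hlj

theorem lswapLE_of_dominates (h : Dominates x y) : LSwapLE x y :=
  reflTransGen_of_exists_step (Dominates x) moment (fun z hz hzx => by
    obtain ⟨i, j, hij, hzij, -, hz'⟩ := hz.exists_leftSwap (Ne.symm hzx)
    exact ⟨_, ⟨i, j, hij, hzij, rfl⟩, hz', moment_lt_of_leftSwapStep ⟨i, j, hij, hzij, rfl⟩⟩) h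

theorem pinnedSwapLE_of_dominates (h : Dominates x y)
    (hpos : ∀ l, 0 < x l ↔ 0 < y l) : PinnedSwapLE x y := by
  refine reflTransGen_of_exists_step (fun z => Dominates x z ∧ ∀ l, 0 < x l ↔ 0 < z l) moment
    (fun z ⟨hz, hzpos⟩ hzx => ?_) ⟨h, hpos⟩
  obtain ⟨i, j, hij, hzij, hzix, hz'⟩ := hz.exists_leftSwap (Ne.symm hzx)
  have hzi : 0 < z i := (hzpos i).1 (by omega)
  have hstep : PinnedSwapStep z (fun l => z (Equiv.swap i j l)) := ⟨i, j, hij, hzi, hzij, rfl⟩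
  refine ⟨_, hstep, ⟨hz', fun l => ?_⟩, moment_lt_of_leftSwapStep ⟨i, j, hij, hzij, rfl⟩⟩
  rw [hzpos l]
  exact (PinnedSwapLE.pos_iff (.single hstep) l).symm

end Exchange

/-- The truncated subtraction does not change the maximum for `k ≤ n`, since the term `k' = k` is
`countGE γ 0 k t ≥ 0`. -/
def minCount (α γ : Fin n → ℕ) (k t : ℕ) : ℕ :=
  (Icc k n).sup fun k' => countGE γ 0 k' t - countGE α k k' 1

section MinCount

variable {α γ : Fin n → ℕ}

variable (α γ) in
theorem le_minCount {k k' : ℕ} (hk : k ≤ k') (hk' : k' ≤ n) (t : ℕ) :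
    countGE γ 0 k' t - countGE α k k' 1 ≤ minCount α γ k t :=
  le_sup (f := fun k' => countGE γ 0 k' t - countGE α k k' 1) (mem_Icc.2 ⟨hk, hk'⟩)

theorem minCount_le {k t M : ℕ}
    (h : ∀ k', k ≤ k' → k' ≤ n → countGE γ 0 k' t ≤ M + countGE α k k' 1) :
    minCount α γ k t ≤ M :=
  Finset.sup_le fun k' hk' => by
    have := h k' (mem_Icc.1 hk').1 (mem_Icc.1 hk').2
    omega

variable (α γ) in
theorem exists_minCount_eq {k : ℕ} (hk : k ≤ n) (t : ℕ) :
    ∃ k', k ≤ k' ∧ k' ≤ n ∧ minCount α γ k t = countGE γ 0 k' t - countGE α k k' 1 := by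
  obtain ⟨k', hk', he⟩ := exists_mem_eq_sup (Icc k n) (nonempty_Icc.2 hk)
    fun k' => countGE γ 0 k' t - countGE α k k' 1
  exact ⟨k', (mem_Icc.1 hk').1, (mem_Icc.1 hk').2, he⟩

variable (α γ) in
theorem countGE_le_minCount {k : ℕ} (hk : k ≤ n) (t : ℕ) :
    countGE γ 0 k t ≤ minCount α γ k t := by
  simpa [countGE_of_le α le_rfl] using le_minCount α γ le_rfl hk t

theorem minCount_self (t : ℕ) : minCount α γ n t = countGE γ 0 n t :=
  le_antisymm (minCount_le fun k' hk hk' => by rw [le_antisymm hk' hk]; omega)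
    (countGE_le_minCount α γ le_rfl t)

theorem minCount_le_countGE {β : Fin n → ℕ} (hβγ : Dominates β γ) (hβα : ∀ l, 0 < β l → 0 < α l)
    (k : ℕ) {t : ℕ} (ht : 1 ≤ t) : minCount α γ k t ≤ countGE β 0 k t :=
  minCount_le fun k' hk hk' => by
    have hβ : countGE β k k' t ≤ countGE α k k' 1 :=
      countGE_le_countGE fun l ha hb htl => ⟨ha, hb, hβα l (by omega)⟩
    have := hβγ.prefix_le k' hk' t ht
    have := countGE_add β (Nat.zero_le k) hk t
    omega

theorem minCount_zero (hαγ : Dominates α γ) {t : ℕ} (ht : 1 ≤ t) : minCount α γ 0 t = 0 := by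
  simpa [countGE_of_le α le_rfl] using minCount_le_countGE hαγ (fun _ => id) 0 ht

theorem minCount_one (hαγ : Dominates α γ) {k : ℕ} (hk : k ≤ n) :
    minCount α γ k 1 = countGE α 0 k 1 := by
  refine le_antisymm (minCount_le_countGE hαγ (fun _ => id) k le_rfl) ?_
  have := le_minCount α γ hk le_rfl 1
  have := countGE_add α (Nat.zero_le k) hk 1
  have := hαγ.total_eq 1 le_rfl
  omega

theorem minCount_eq_zero (k : ℕ) {t : ℕ} (ht : ∀ l, γ l < t) : minCount α γ k t = 0 :=
  Nat.le_zero.1 <| minCount_le fun k' _ _ => by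
    rw [zero_add]
    exact countGE_le_countGE fun l _ _ htl => absurd htl (ht l).not_ge

variable (α γ) in
theorem minCount_le_minCount_succ (i : Fin n) (t : ℕ) :
    minCount α γ i t ≤ minCount α γ (i + 1) t :=
  minCount_le fun k' hk hk' => by
    rcases hk.eq_or_lt with rfl | hik
    · have : countGE γ 0 i t ≤ countGE γ 0 (i + 1) t :=
        countGE_le_countGE fun l ha hb ht => ⟨ha, by omega, ht⟩
      have := countGE_le_minCount α γ (show (i : ℕ) + 1 ≤ n from i.isLt) t
      omega
    · have := le_minCount α γ (show (i : ℕ) + 1 ≤ k' from hik) hk' t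
      have := countGE_add α (Nat.le_add_right (i : ℕ) 1) hik 1
      omega

variable (α γ) in
theorem minCount_succ_le (i : Fin n) (t : ℕ) :
    minCount α γ (i + 1) t ≤ minCount α γ i t + countGE α i (i + 1) 1 :=
  minCount_le fun k' hk hk' => by
    have := le_minCount α γ (Nat.le_of_succ_le hk) hk' t
    have := countGE_add α (Nat.le_add_right (i : ℕ) 1) hk 1
    omega

variable (α γ) in
theorem minCount_succ_le_add_one (i : Fin n) (t : ℕ) :
    minCount α γ (i + 1) t ≤ minCount α γ i t + 1 := by
  have := minCount_succ_le α γ i t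
  rw [countGE_self_succ] at this
  split_ifs at this <;> omega

theorem minCount_lt_succ_of_le {i : Fin n} {t t' : ℕ} (htt : t' ≤ t)
    (h : minCount α γ i t < minCount α γ (i + 1) t) :
    minCount α γ i t' < minCount α γ (i + 1) t' := by
  have hαi : countGE α i (i + 1) 1 = 1 := by
    have := minCount_succ_le α γ i t
    rw [countGE_self_succ] at this ⊢
    split_ifs at this ⊢ <;> omega
  obtain ⟨k₀, hk₀, hk₀n, he₀⟩ := exists_minCount_eq α γ (show (i : ℕ) + 1 ≤ n from i.isLt) t
  have hsplit₀ := countGE_add α (Nat.le_add_right (i : ℕ) 1) hk₀ 1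
  have := le_minCount α γ hk₀ hk₀n t'
  by_contra! hnot
  by_cases hG : minCount α γ i t' = countGE γ 0 i t'
  · -- lowering `t` to `t'` adds at least as many parts to `[0, k₀)` as to `[0, i)`
    have := countGE_add_countGE_le γ (Nat.le_of_succ_le hk₀) htt
    have := countGE_le_minCount α γ i.isLt.le t
    omega
  · obtain ⟨k₁, hk₁, hk₁n, he₁⟩ := exists_minCount_eq α γ i.isLt.le t'
    have := countGE_le_minCount α γ i.isLt.le t'
    rcases hk₁.eq_or_lt with rfl | hik₁
    · simp only [countGE_of_le α le_rfl, Nat.sub_zero] at he₁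
      exact hG he₁
    have := le_minCount α γ (show (i : ℕ) + 1 ≤ k₁ from hik₁) hk₁n t'
    have := countGE_add α (Nat.le_add_right (i : ℕ) 1) hik₁ 1
    omega

end MinCount

def maxPinned (α γ : Fin n → ℕ) : Fin n → ℕ := fun i =>
  #{t ∈ Icc 1 (univ.sup γ) | minCount α γ i t < minCount α γ (i + 1) t}

section MaxPinned

variable {α γ : Fin n → ℕ}

variable (α γ) in
theorem le_maxPinned_iff (i : Fin n) {t : ℕ} (ht : 1 ≤ t) :
    t ≤ maxPinned α γ i ↔ minCount α γ i t < minCount α γ (i + 1) t := by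
  refine le_card_filter_Icc_iff (fun t' t htt => minCount_lt_succ_of_le htt) (fun u hu => ?_) ht
  by_contra! hγu
  have hγ (l : Fin n) : γ l < u := (le_sup (f := γ) (mem_univ l)).trans_lt hγu
  rw [minCount_eq_zero _ hγ, minCount_eq_zero _ hγ] at hu
  exact hu.false

theorem countGE_maxPinned (hαγ : Dominates α γ) {k : ℕ} (hk : k ≤ n) {t : ℕ} (ht : 1 ≤ t) :
    countGE (maxPinned α γ) 0 k t = minCount α γ k t := by
  induction k with
  | zero => rw [countGE_of_le _ le_rfl, minCount_zero hαγ ht]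
  | succ k ih =>
    obtain ⟨i, rfl⟩ : ∃ i : Fin n, (i : ℕ) = k := ⟨⟨k, hk⟩, rfl⟩
    have hmono := minCount_le_minCount_succ α γ i t
    have hstep := minCount_succ_le_add_one α γ i t
    have hjump := le_maxPinned_iff α γ i ht
    rw [countGE_succ _ i (Nat.zero_le _), ih (Nat.le_of_succ_le hk)]
    split_ifs with h
    · have := hjump.1 h
      omega
    · have := mt hjump.2 h
      omega

theorem maxPinned_pos_iff (hαγ : Dominates α γ) (i : Fin n) : 0 < maxPinned α γ i ↔ 0 < α i := by
  have hjump := le_maxPinned_iff α γ i le_rfl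
  rw [minCount_one hαγ i.isLt.le, minCount_one hαγ i.isLt, countGE_succ α i (Nat.zero_le _)]
    at hjump
  split_ifs at hjump <;> omega

theorem dominates_maxPinned (hαγ : Dominates α γ) : Dominates α (maxPinned α γ) where
  total_eq t ht := by
    rw [countGE_maxPinned hαγ le_rfl ht, minCount_self, hαγ.total_eq t ht]
  prefix_le k hk t ht := by
    rw [countGE_maxPinned hαγ hk ht]
    exact minCount_le_countGE hαγ (fun _ => id) k ht

theorem maxPinned_dominates (hαγ : Dominates α γ) : Dominates (maxPinned α γ) γ where
  total_eq t ht := by rw [countGE_maxPinned hαγ le_rfl ht, minCount_self]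
  prefix_le k hk t ht := by
    rw [countGE_maxPinned hαγ hk ht]
    exact countGE_le_minCount α γ hk t

theorem dominates_maxPinned_of_pinnedSwapLE (hαγ : Dominates α γ) {β : Fin n → ℕ}
    (hαβ : PinnedSwapLE α β) (hβγ : Dominates β γ) : Dominates β (maxPinned α γ) where
  total_eq t ht := by rw [hβγ.total_eq t ht, (maxPinned_dominates hαγ).total_eq t ht]
  prefix_le k hk t ht := by
    rw [countGE_maxPinned hαγ hk ht]
    exact minCount_le_countGE hβγ (fun l => (PinnedSwapLE.pos_iff hαβ l).2) k ht

end MaxPinned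

end PinnedSwap

open PinnedSwap in
/-- For any weak compositions `α ⪯ γ` there is a unique maximal `β` with
`α ⪯⁰ β` and `β ⪯ γ`. -/
theorem exists_unique_maximal_pinned {n : ℕ} (α γ : Fin n → ℕ)
    (h : LSwapLE α γ) :
    ∃! β : Fin n → ℕ, PinnedSwapLE α β ∧ LSwapLE β γ ∧
      ∀ β' : Fin n → ℕ, PinnedSwapLE α β' → LSwapLE β' γ → LSwapLE β' β := by
  have hαγ := h.dominates
  have hmax (β : Fin n → ℕ) (hαβ : PinnedSwapLE α β) (hβγ : LSwapLE β γ) :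
      LSwapLE β (maxPinned α γ) :=
    lswapLE_of_dominates (dominates_maxPinned_of_pinnedSwapLE hαγ hαβ hβγ.dominates)
  have hpinned : PinnedSwapLE α (maxPinned α γ) :=
    pinnedSwapLE_of_dominates (dominates_maxPinned hαγ) fun i => (maxPinned_pos_iff hαγ i).symm
  have hle : LSwapLE (maxPinned α γ) γ := lswapLE_of_dominates (maxPinned_dominates hαγ)
  refine ⟨maxPinned α γ, ⟨hpinned, hle, hmax⟩, fun β ⟨hαβ, hβγ, hβ⟩ => ?_⟩
  exact LSwapLE.antisymm (hmax β hαβ hβγ) (hβ _ hpinned hle)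
end

section
/- The thread decomposition of a diagram partitions its set of cells: every cell belongs to exactly one thread, and the algorithm terminates. -/
/-- `ThreadSpec D ts`: the list `ts` of threads is a run of the greedy
threading algorithm on the diagram `D`. Thread `i` is constructed from the set
`U` of cells not threaded by the earlier threads: it starts at the
rightmost-then-lowest cell of `U`; after a cell `x`, the next cell is the
lowest cell of `U` (not already on this thread) in the column immediately left
of `x` lying weakly above `x`; and the thread stops in column `1` or when no
such cell exists.  All cells get threaded. -/
def ThreadSpec (D : Diagram) (ts : List (List Cell)) : Prop :=
  ((ts.flatten).toFinset = D) ∧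
  ∀ i (hi : i < ts.length),
    (ts.get ⟨i, hi⟩ ≠ []) ∧
    (∀ h0 : 0 < (ts.get ⟨i, hi⟩).length,
      ((ts.get ⟨i, hi⟩).get ⟨0, h0⟩ ∈ D \ (((ts.take i).flatten).toFinset) ∧
      ∀ p ∈ D \ (((ts.take i).flatten).toFinset),
        p.1 ≤ ((ts.get ⟨i, hi⟩).get ⟨0, h0⟩).1 ∧
        (p.1 = ((ts.get ⟨i, hi⟩).get ⟨0, h0⟩).1 →
          ((ts.get ⟨i, hi⟩).get ⟨0, h0⟩).2 ≤ p.2))) ∧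
    (∀ j (hj : j + 1 < (ts.get ⟨i, hi⟩).length),
      ((ts.get ⟨i, hi⟩).get ⟨j+1, hj⟩ ∈ D \ (((ts.take i).flatten).toFinset) ∧
       (ts.get ⟨i, hi⟩).get ⟨j+1, hj⟩ ∉ (ts.get ⟨i, hi⟩).take (j+1) ∧
       ((ts.get ⟨i, hi⟩).get ⟨j+1, hj⟩).1 + 1 =
          ((ts.get ⟨i, hi⟩).get ⟨j, Nat.lt_of_succ_lt hj⟩).1 ∧
       ((ts.get ⟨i, hi⟩).get ⟨j, Nat.lt_of_succ_lt hj⟩).2 ≤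
          ((ts.get ⟨i, hi⟩).get ⟨j+1, hj⟩).2 ∧
       (∀ p ∈ D \ (((ts.take i).flatten).toFinset),
         p ∉ (ts.get ⟨i, hi⟩).take (j+1) →
         p.1 + 1 = ((ts.get ⟨i, hi⟩).get ⟨j, Nat.lt_of_succ_lt hj⟩).1 →
         ((ts.get ⟨i, hi⟩).get ⟨j, Nat.lt_of_succ_lt hj⟩).2 ≤ p.2 →
         ((ts.get ⟨i, hi⟩).get ⟨j+1, hj⟩).2 ≤ p.2))) ∧
    (∀ hne : ts.get ⟨i, hi⟩ ≠ [],
      ((ts.get ⟨i, hi⟩).getLast hne).1 = 1 ∨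
      ¬ ∃ p ∈ D \ (((ts.take i).flatten).toFinset), p ∉ ts.get ⟨i, hi⟩ ∧
          p.1 + 1 = ((ts.get ⟨i, hi⟩).getLast hne).1 ∧
          ((ts.get ⟨i, hi⟩).getLast hne).2 ≤ p.2)

/-! Each greedy step moves exactly one column to the left, so a thread is built by recursion on
the column of its current cell, and its columns strictly decrease, which makes its cells distinct.
A thread contains its start cell, so removing it strictly shrinks the set of unthreaded cells and
recursion on the cardinality of that set produces the whole decomposition; distinct threads are
disjoint because each one is drawn from the cells its predecessors left unthreaded. -/

def cellsLeftAbove (U : Finset Cell) (x : Cell) : Finset Cell :=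
  U.filter fun p => p.1 + 1 = x.1 ∧ x.2 ≤ p.2

def IsNextCell (U : Finset Cell) (x y : Cell) : Prop :=
  y ∈ cellsLeftAbove U x ∧ ∀ p ∈ cellsLeftAbove U x, y.2 ≤ p.2

def IsStartCell (U : Finset Cell) (s : Cell) : Prop :=
  s ∈ U ∧ ∀ p ∈ U, p.1 ≤ s.1 ∧ (p.1 = s.1 → s.2 ≤ p.2)

structure IsGreedyThread (U : Finset Cell) (t : List Cell) : Prop where
  subset : ∀ p ∈ t, p ∈ U
  isChain : t.IsChain (IsNextCell U)
  cellsLeftAbove_getLast : ∀ hne : t ≠ [], cellsLeftAbove U (t.getLast hne) = ∅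

lemma mem_cellsLeftAbove {U : Finset Cell} {x p : Cell} :
    p ∈ cellsLeftAbove U x ↔ p ∈ U ∧ p.1 + 1 = x.1 ∧ x.2 ≤ p.2 :=
  Finset.mem_filter

lemma exists_isStartCell {U : Finset Cell} (hU : U.Nonempty) : ∃ s, IsStartCell U s := by
  -- the rightmost-then-lowest cell is the maximum in `ℕ ×ₗ ℕᵒᵈ`
  obtain ⟨s, hs, hmax⟩ := U.exists_max_image (fun p => toLex (p.1, OrderDual.toDual p.2)) hU
  exact ⟨s, hs, fun p hp => Prod.Lex.toLex_le_toLex'.mp (hmax p hp)⟩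

namespace IsGreedyThread

variable {U : Finset Cell} {t : List Cell}

lemma singleton {x : Cell} (hx : x ∈ U) (hstuck : cellsLeftAbove U x = ∅) :
    IsGreedyThread U [x] :=
  ⟨by simpa using hx, .singleton x, fun _ => hstuck⟩

lemma cons {x y : Cell} {l : List Cell} (ht : IsGreedyThread U (y :: l)) (hx : x ∈ U)
    (hxy : IsNextCell U x y) : IsGreedyThread U (x :: y :: l) where
  subset := List.forall_mem_cons.mpr ⟨hx, ht.subset⟩
  isChain := ht.isChain.cons_cons hxy
  cellsLeftAbove_getLast _ := by
    rw [List.getLast_cons (List.cons_ne_nil y l)]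
    exact ht.cellsLeftAbove_getLast _

lemma pairwise_fst_gt (ht : IsGreedyThread U t) : t.Pairwise fun a b => b.1 < a.1 := by
  have hchain : (t.map Prod.fst).IsChain (· > ·) := by
    refine List.isChain_map_of_isChain Prod.fst (fun a b hab => ?_) ht.isChain
    have := (mem_cellsLeftAbove.mp hab.1).2.1
    omega
  exact List.pairwise_map.mp hchain.pairwise

lemma nodup (ht : IsGreedyThread U t) : t.Nodup :=
  ht.pairwise_fst_gt.imp fun h heq => (heq ▸ h).false

lemma getElem_succ_notMem_take (ht : IsGreedyThread U t) (j : ℕ) (hj : j + 1 < t.length) :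
    t[j + 1] ∉ t.take (j + 1) := by
  intro hmem
  have hsplit := ht.pairwise_fst_gt
  rw [← List.take_append_drop (j + 1) t, List.pairwise_append] at hsplit
  have hdrop : t[j + 1] ∈ t.drop (j + 1) := by
    rw [List.drop_eq_getElem_cons hj]
    exact List.mem_cons_self
  exact (hsplit.2.2 _ hmem _ hdrop).false

end IsGreedyThread

theorem exists_isGreedyThread {U : Finset Cell} {x : Cell} (hx : x ∈ U) :
    ∃ l, IsGreedyThread U (x :: l) := by
  by_cases hne : (cellsLeftAbove U x).Nonempty
  · obtain ⟨y, hy, hlowest⟩ := (cellsLeftAbove U x).exists_min_image Prod.snd hne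
    obtain ⟨l, hl⟩ := exists_isGreedyThread (mem_cellsLeftAbove.mp hy).1
    exact ⟨y :: l, hl.cons hx ⟨hy, hlowest⟩⟩
  · exact ⟨[], .singleton hx (Finset.not_nonempty_iff_eq_empty.mp hne)⟩
termination_by x.1
decreasing_by have := (mem_cellsLeftAbove.mp hy).2.1; omega

lemma threadSpec_empty : ThreadSpec ∅ [] :=
  ⟨rfl, fun _ hi => absurd hi (Nat.not_lt_zero _)⟩

lemma ThreadSpec.cons {U : Finset Cell} {s : Cell} {l : List Cell} {ts : List (List Cell)}
    (hs : IsStartCell U s) (ht : IsGreedyThread U (s :: l))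
    (hts : ThreadSpec (U \ (s :: l).toFinset) ts) : ThreadSpec U ((s :: l) :: ts) := by
  refine ⟨?_, ?_⟩
  · rw [List.flatten_cons, List.toFinset_append, hts.1,
      Finset.union_sdiff_of_subset fun p hp => ht.subset p (List.mem_toFinset.mp hp)]
  rintro (_ | i) hi
  · simp only [List.get_eq_getElem, List.getElem_cons_zero, List.take_zero, List.flatten_nil,
      List.toFinset_nil, Finset.sdiff_empty]
    refine ⟨List.cons_ne_nil s l, fun _ => hs, fun j hj => ?_, fun hne => .inr ?_⟩
    · obtain ⟨hnext, hlowest⟩ := ht.isChain.getElem j hj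
      obtain ⟨hmem, hcol, hrow⟩ := mem_cellsLeftAbove.mp hnext
      exact ⟨hmem, ht.getElem_succ_notMem_take j hj, hcol, hrow,
        fun p hp _ hpcol hprow => hlowest p (mem_cellsLeftAbove.mpr ⟨hp, hpcol, hprow⟩)⟩
    · rintro ⟨p, hp, -, hpcol, hprow⟩
      have hp' := mem_cellsLeftAbove.mpr ⟨hp, hpcol, hprow⟩
      rw [ht.cellsLeftAbove_getLast hne] at hp'
      exact Finset.notMem_empty p hp'
  · simpa only [List.get_eq_getElem, List.getElem_cons_succ, List.take_succ_cons,
      List.flatten_cons, List.toFinset_append, Finset.sdiff_union_distrib,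
      Finset.sdiff_sdiff_left'] using hts.2 i (Nat.lt_of_succ_lt_succ hi)

theorem exists_threadSpec_nodup (U : Finset Cell) :
    ∃ ts : List (List Cell), ThreadSpec U ts ∧ ts.flatten.Nodup := by
  obtain rfl | hU := U.eq_empty_or_nonempty
  · exact ⟨[], threadSpec_empty, List.nodup_nil⟩
  obtain ⟨s, hs⟩ := exists_isStartCell hU
  obtain ⟨l, ht⟩ := exists_isGreedyThread hs.1
  obtain ⟨ts, hts, hnodup⟩ := exists_threadSpec_nodup (U \ (s :: l).toFinset)
  refine ⟨(s :: l) :: ts, hts.cons hs ht, ?_⟩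
  rw [List.flatten_cons, List.nodup_append]
  refine ⟨ht.nodup, hnodup, fun p hp q hq hpq => ?_⟩
  have hq' : q ∈ U \ (s :: l).toFinset := hts.1 ▸ List.mem_toFinset.mpr hq
  exact (Finset.mem_sdiff.mp hq').2 (List.mem_toFinset.mpr (hpq ▸ hp))
termination_by U.card
decreasing_by
  exact Finset.card_lt_card <|
    Finset.sdiff_ssubset (fun p hp => ht.subset p (List.mem_toFinset.mp hp)) ⟨s, by simp⟩

/-- The greedy threading algorithm terminates and partitions the cells of any
diagram: there is a (finite) list of threads satisfying the greedy
specification, in which every cell of the diagram appears exactly once. -/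
theorem thread_decomposition_partition (D : Diagram) :
    ∃ ts : List (List Cell), ThreadSpec D ts ∧
      (ts.flatten).Nodup ∧ ∀ p ∈ D, p ∈ ts.flatten := by
  obtain ⟨ts, hts, hnodup⟩ := exists_threadSpec_nodup D
  exact ⟨ts, hts, hnodup, fun p hp => List.mem_toFinset.mp (hts.1.symm ▸ hp)⟩
end
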